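/- arXiv:1611.01905 — 12 statements merged into one kernel-verified Lean document; each statement's English description precedes it below -/
import Mathlib

section
/- Let f : ℝ → ℝ be convex on an interval I and let a, b ∈ I with a < b. Then (1/(b-a)) ∫_a^b f(t) dt ≤ (1/4)(f(a) + f(b)) + (1/2) f((a+b)/2). -/
open MeasureTheory intervalIntegral

/-! A convex function lies below its chords, so `∫_x^y f ≤ (y - x) (f x + f y) / 2` (the trapezoid
bound). Applying this on the two halves `[a, m]` and `[m, b]`, with `m = (a + b) / 2`, and adding
gives the claim. -/

theorem ConvexOn.le_chord {f : ℝ → ℝ} {I : Set ℝ} (hf : ConvexOn ℝ I f) {a b t : ℝ}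
    (ha : a ∈ I) (hb : b ∈ I) (hat : a ≤ t) (htb : t ≤ b) (hab : a < b) :
    f t ≤ ((b - t) * f a + (t - a) * f b) / (b - a) := by
  have hba : 0 < b - a := sub_pos.2 hab
  have key := hf.2 ha hb (div_nonneg (sub_nonneg.2 htb) hba.le)
    (div_nonneg (sub_nonneg.2 hat) hba.le) (by field_simp; ring)
  have ht : ((b - t) / (b - a)) • a + ((t - a) / (b - a)) • b = t := by
    simp only [smul_eq_mul]; field_simp; ring
  rw [ht] at key
  calc f t ≤ (b - t) / (b - a) * f a + (t - a) / (b - a) * f b := key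
    _ = ((b - t) * f a + (t - a) * f b) / (b - a) := by ring

theorem integral_chord {a b : ℝ} (u v : ℝ) (hab : a ≠ b) :
    ∫ t in a..b, ((b - t) * u + (t - a) * v) / (b - a) = (b - a) * (u + v) / 2 := by
  have hba : b - a ≠ 0 := sub_ne_zero.2 hab.symm
  have affine : ∀ t, ((b - t) * u + (t - a) * v) / (b - a)
      = (b * u - a * v) / (b - a) + (v - u) / (b - a) * t := by
    intro t; field_simp; ring
  simp only [affine]
  rw [integral_add intervalIntegrable_const ((continuous_const_mul _).intervalIntegrable a b),
    intervalIntegral.integral_const, intervalIntegral.integral_const_mul, integral_id, smul_eq_mul]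
  field_simp; ring

theorem ConvexOn.integral_le_trapezoid {f : ℝ → ℝ} {I : Set ℝ} (hf : ConvexOn ℝ I f) {a b : ℝ}
    (ha : a ∈ I) (hb : b ∈ I) (hab : a < b) (hint : IntervalIntegrable f volume a b) :
    ∫ t in a..b, f t ≤ (b - a) * (f a + f b) / 2 := by
  rw [← integral_chord (f a) (f b) hab.ne]
  exact integral_mono_on hab.le hint ((by fun_prop : Continuous _).intervalIntegrable a b)
    fun t ht => hf.le_chord ha hb ht.1 ht.2 hab

/-- **Theorem 1 (Hermite–Hadamard refinement, upper bound).**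
If `f` is convex on an interval `I` and `a, b ∈ I` with `a < b`, then
`(1/(b-a)) ∫_a^b f ≤ (1/4)(f a + f b) + (1/2) f ((a+b)/2)`. -/
theorem stmt_0 (f : ℝ → ℝ) (I : Set ℝ) (hf : ConvexOn ℝ I f)
    (a b : ℝ) (ha : a ∈ I) (hb : b ∈ I) (hab : a < b)
    (hint : IntervalIntegrable f volume a b) :
    (1 / (b - a)) * ∫ t in a..b, f t ≤
      (1 / 4) * (f a + f b) + (1 / 2) * f ((a + b) / 2) := by
  set m := (a + b) / 2
  have ham : a < m := left_lt_add_div_two.2 hab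
  have hmb : m < b := add_div_two_lt_right.2 hab
  have hmI : m ∈ I := hf.1.ordConnected.out ha hb ⟨ham.le, hmb.le⟩
  have hm : m ∈ Set.uIcc a b := Set.mem_uIcc_of_le ham.le hmb.le
  have hint₁ : IntervalIntegrable f volume a m :=
    hint.mono_set (Set.uIcc_subset_uIcc Set.left_mem_uIcc hm)
  have hint₂ : IntervalIntegrable f volume m b :=
    hint.mono_set (Set.uIcc_subset_uIcc hm Set.right_mem_uIcc)
  have h₁ := hf.integral_le_trapezoid ha hmI ham hint₁
  have h₂ := hf.integral_le_trapezoid hmI hb hmb hint₂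
  rw [← integral_add_adjacent_intervals hint₁ hint₂, div_mul_eq_mul_div, div_le_iff₀ (sub_pos.2 hab)]
  have hma : m - a = (b - a) / 2 := by ring
  have hbm : b - m = (b - a) / 2 := by ring
  rw [hma] at h₁
  rw [hbm] at h₂
  linear_combination h₁ + h₂
end

section
/- Let f : ℝ → ℝ be four times continuously differentiable on an interval I, and suppose f and its second derivative f'' are both convex on I. Then for all a, b ∈ I with a < b: ((b-a)^2/48) f''((a+b)/2) ≤ (1/4)(f(a)+f(b)) + (1/2) f((a+b)/2) − (1/(b-a)) ∫_a^b f(t) dt ≤ ((b-a)^2/96) (f''(a) + f''(b)). -/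
/-! Write `a = m - r`, `b = m + r` and let `E(x)` be `2x` times the Bullen gap of `f` on
`[m - x, m + x]`. Then `E(0) = E'(0) = 0` and `E''(x) = x (f''(m - x) + f''(m + x)) / 2`.
Convexity of `f''` squeezes `(f''(m - x) + f''(m + x)) / 2` between `f''(m)` and
`(f''(a) + f''(b)) / 2` for `0 ≤ x ≤ r`, and comparing `E` with the cubics `c x³ / 6`, whose
second derivative is `c x`, gives both bounds at `x = r`. -/

open MeasureTheory intervalIntegral Set

theorem sub_mem_Ioo_and_add_mem_Ioo {m r x : ℝ} (hx : x ∈ Ioo (-r) r) :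
    m - x ∈ Ioo (m - r) (m + r) ∧ m + x ∈ Ioo (m - r) (m + r) :=
  ⟨⟨by linarith [hx.2], by linarith [hx.1]⟩, ⟨by linarith [hx.1], by linarith [hx.2]⟩⟩

theorem ConvexOn.map_add_map_le_of_add_eq {s : Set ℝ} {g : ℝ → ℝ} (hg : ConvexOn ℝ s g)
    {p q u v : ℝ} (hp : p ∈ s) (hq : q ∈ s) (hu : u ∈ Icc p q) (huv : u + v = p + q) :
    g u + g v ≤ g p + g q := by
  rcases (hu.1.trans hu.2).eq_or_lt with rfl | hpq
  · obtain rfl : u = p := le_antisymm hu.2 hu.1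
    obtain rfl : v = u := by linarith
    rfl
  have hqp : 0 < q - p := sub_pos.2 hpq
  have hw₁ : 0 ≤ (q - u) / (q - p) := div_nonneg (by linarith [hu.2]) hqp.le
  have hw₂ : 0 ≤ (u - p) / (q - p) := div_nonneg (by linarith [hu.1]) hqp.le
  have hw : (q - u) / (q - p) + (u - p) / (q - p) = 1 := by field_simp; ring
  have hgu := hg.2 hp hq hw₁ hw₂ hw
  have hgv := hg.2 hp hq hw₂ hw₁ (by linarith)
  simp only [smul_eq_mul] at hgu hgv
  have hu' : (q - u) / (q - p) * p + (u - p) / (q - p) * q = u := by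
    field_simp; ring
  have hv' : (u - p) / (q - p) * p + (q - u) / (q - p) * q = v := by
    field_simp; linear_combination (p - q) * huv
  rw [hu'] at hgu
  rw [hv'] at hgv
  linear_combination hgu + hgv + (g p + g q) * hw

theorem ConvexOn.map_le_avg_map_sub_add {s : Set ℝ} {g : ℝ → ℝ} (hg : ConvexOn ℝ s g)
    {m x : ℝ} (hx : 0 ≤ x) (hl : m - x ∈ s) (hu : m + x ∈ s) :
    g m ≤ (g (m + x) + g (m - x)) / 2 := by
  have := hg.map_add_map_le_of_add_eq hl hu (u := m) (v := m) ⟨by linarith, by linarith⟩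
    (by ring)
  linarith

theorem ConvexOn.avg_map_sub_add_le {s : Set ℝ} {g : ℝ → ℝ} (hg : ConvexOn ℝ s g)
    {m r x : ℝ} (hx : x ∈ Icc (-r) r) (hl : m - r ∈ s) (hu : m + r ∈ s) :
    (g (m + x) + g (m - x)) / 2 ≤ (g (m - r) + g (m + r)) / 2 := by
  have := hg.map_add_map_le_of_add_eq hl hu (u := m + x) (v := m - x)
    ⟨by linarith [hx.1], by linarith [hx.2]⟩ (by ring)
  linarith

theorem image_le_of_deriv2_le {g g' g'' h h' h'' : ℝ → ℝ} {r : ℝ} (hr : 0 ≤ r)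
    (hgc : ContinuousOn g (Icc 0 r)) (hhc : ContinuousOn h (Icc 0 r))
    (hg : ∀ x ∈ Ico 0 r, HasDerivAt g (g' x) x) (hh : ∀ x ∈ Ico 0 r, HasDerivAt h (h' x) x)
    (hg' : ∀ x ∈ Ico 0 r, HasDerivAt g' (g'' x) x)
    (hh' : ∀ x ∈ Ico 0 r, HasDerivAt h' (h'' x) x)
    (h₀ : g 0 = h 0) (h₀' : g' 0 = h' 0) (hle : ∀ x ∈ Ioo 0 r, g'' x ≤ h'' x) :
    g r ≤ h r := by
  have hmono' : MonotoneOn (h' - g') (Ico 0 r) := by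
    refine monotoneOn_of_hasDerivWithinAt_nonneg (convex_Ico 0 r) (f' := h'' - g'')
      (fun x hx => ((hh' x hx).sub (hg' x hx)).continuousAt.continuousWithinAt) ?_ ?_
    all_goals rw [interior_Ico]; intro x hx
    · exact ((hh' x (Ioo_subset_Ico_self hx)).sub
        (hg' x (Ioo_subset_Ico_self hx))).hasDerivWithinAt
    · exact sub_nonneg.2 (hle x hx)
  have hd' : ∀ x ∈ Ioo 0 r, 0 ≤ h' x - g' x := fun x hx => by
    simpa [h₀'] using hmono' ⟨le_rfl, hx.1.trans hx.2⟩ (Ioo_subset_Ico_self hx) hx.1.le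
  have hmono : MonotoneOn (h - g) (Icc 0 r) := by
    refine monotoneOn_of_hasDerivWithinAt_nonneg (convex_Icc 0 r) (f' := h' - g') (hhc.sub hgc)
      ?_ ?_
    all_goals rw [interior_Icc]; intro x hx
    · exact ((hh x (Ioo_subset_Ico_self hx)).sub
        (hg x (Ioo_subset_Ico_self hx))).hasDerivWithinAt
    · exact hd' x hx
  simpa [h₀] using hmono ⟨le_rfl, hr⟩ ⟨hr, le_rfl⟩ hr

theorem ContDiffOn.differentiableAt_deriv {f : ℝ → ℝ} {s : Set ℝ} {n : WithTop ℕ∞}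
    (hf : ContDiffOn ℝ n f s) (hn : 2 ≤ n) {y : ℝ} (hy : y ∈ interior s) :
    DifferentiableAt ℝ (deriv f) y :=
  (((hf.mono interior_subset).deriv_of_isOpen isOpen_interior (m := 1)
    (by rw [one_add_one_eq_two]; exact hn)).differentiableOn one_ne_zero).differentiableAt
    (isOpen_interior.mem_nhds hy)

section
variable {E : Type*} [NormedAddCommGroup E] [NormedSpace ℝ E] {f : ℝ → E} {m r : ℝ}

theorem continuousOn_integral_sub_add (hr : 0 ≤ r) (hf : ContinuousOn f (Icc (m - r) (m + r))) :
    ContinuousOn (fun x => ∫ t in (m - x)..(m + x), f t) (Icc 0 r) := by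
  have hIcc : uIcc (m - r) (m + r) = Icc (m - r) (m + r) := uIcc_of_le (by linarith)
  have hint : IntervalIntegrable f volume (m - r) (m + r) :=
    (hf.mono hIcc.subset).intervalIntegrable
  have hmem : ∀ x ∈ Icc 0 r,
      m - x ∈ uIcc (m - r) (m + r) ∧ m + x ∈ uIcc (m - r) (m + r) := by
    rw [hIcc]
    exact fun x hx => ⟨⟨by linarith [hx.2], by linarith [hx.1]⟩,
      ⟨by linarith [hx.1], by linarith [hx.2]⟩⟩
  have hm : m ∈ uIcc (m - r) (m + r) := by simpa using (hmem 0 ⟨le_rfl, hr⟩).1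
  have hprim := continuousOn_primitive_interval' hint hm
  refine ((hprim.comp (continuousOn_const.add continuousOn_id) fun x hx => (hmem x hx).2).sub
    (hprim.comp (continuousOn_const.sub continuousOn_id) fun x hx => (hmem x hx).1)).congr
    fun x hx => ?_
  exact (integral_interval_sub_left (hint.mono_set (uIcc_subset_uIcc hm (hmem x hx).2))
    (hint.mono_set (uIcc_subset_uIcc hm (hmem x hx).1))).symm

theorem hasDerivAt_integral_sub_add [CompleteSpace E] (hf : ContinuousOn f (Ioo (m - r) (m + r)))
    {x : ℝ} (hx : x ∈ Ioo (-r) r) :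
    HasDerivAt (fun x => ∫ t in (m - x)..(m + x), f t) (f (m + x) + f (m - x)) x := by
  obtain ⟨hl, hu⟩ := sub_mem_Ioo_and_add_mem_Ioo (m := m) hx
  have hFTC := integral_hasFDerivAt
    ((hf.mono (ordConnected_Ioo.uIcc_subset hl hu)).intervalIntegrable)
    (hf.stronglyMeasurableAtFilter isOpen_Ioo _ hl)
    (hf.stronglyMeasurableAtFilter isOpen_Ioo _ hu)
    (hf.continuousAt (Ioo_mem_nhds hl.1 hl.2)) (hf.continuousAt (Ioo_mem_nhds hu.1 hu.2))
  simpa [Function.comp_def] using hFTC.comp_hasDerivAt x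
    (((hasDerivAt_id x).const_sub m).prodMk ((hasDerivAt_id x).const_add m))

end

/-- `2x` times the gap in Bullen's inequality on `[m - x, m + x]`, i.e. the average of the
midpoint and trapezoid rules minus the mean value of `f` there. -/
noncomputable def bullenError (f : ℝ → ℝ) (m x : ℝ) : ℝ :=
  x / 2 * (f (m - x) + f (m + x)) + x * f m - ∫ t in (m - x)..(m + x), f t

theorem bullenError_eq_mul (f : ℝ → ℝ) {m r : ℝ} (hr : r ≠ 0) :
    bullenError f m r = 2 * r * (1 / 4 * (f (m - r) + f (m + r)) + 1 / 2 * f m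
      - 1 / (2 * r) * ∫ t in (m - r)..(m + r), f t) := by
  unfold bullenError
  field_simp
  ring

section
variable {f f' f'' : ℝ → ℝ} {m r : ℝ}

theorem hasDerivAt_bullenError (hf : ∀ y ∈ Ioo (m - r) (m + r), HasDerivAt f (f' y) y) {x : ℝ}
    (hx : x ∈ Ioo (-r) r) :
    HasDerivAt (bullenError f m)
      (f m - (f (m - x) + f (m + x)) / 2 + x / 2 * (f' (m + x) - f' (m - x))) x := by
  obtain ⟨hl, hu⟩ := sub_mem_Ioo_and_add_mem_Ioo (m := m) hx
  have hfl : HasDerivAt (fun x => f (m - x)) (-f' (m - x)) x :=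
    hf _ hl |>.comp_const_sub m x
  have hfu : HasDerivAt (fun x => f (m + x)) (f' (m + x)) x :=
    hf _ hu |>.comp_const_add m x
  have hint := hasDerivAt_integral_sub_add
    (fun y hy => (hf y hy).continuousAt.continuousWithinAt) hx
  exact ((((hasDerivAt_id x).div_const 2).mul (hfl.add hfu)).add
    ((hasDerivAt_id x).mul_const (f m))).sub hint
    |>.congr_deriv (by simp only [id, Pi.add_apply]; ring)

theorem hasDerivAt_bullenError_deriv (hf : ∀ y ∈ Ioo (m - r) (m + r), HasDerivAt f (f' y) y)
    (hf' : ∀ y ∈ Ioo (m - r) (m + r), HasDerivAt f' (f'' y) y) {x : ℝ}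
    (hx : x ∈ Ioo (-r) r) :
    HasDerivAt
      (fun x => f m - (f (m - x) + f (m + x)) / 2 + x / 2 * (f' (m + x) - f' (m - x)))
      (x / 2 * (f'' (m + x) + f'' (m - x))) x := by
  obtain ⟨hl, hu⟩ := sub_mem_Ioo_and_add_mem_Ioo (m := m) hx
  have hfl : HasDerivAt (fun x => f (m - x)) (-f' (m - x)) x :=
    hf _ hl |>.comp_const_sub m x
  have hfu : HasDerivAt (fun x => f (m + x)) (f' (m + x)) x :=
    hf _ hu |>.comp_const_add m x
  have hf'l : HasDerivAt (fun x => f' (m - x)) (-f'' (m - x)) x :=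
    hf' _ hl |>.comp_const_sub m x
  have hf'u : HasDerivAt (fun x => f' (m + x)) (f'' (m + x)) x :=
    hf' _ hu |>.comp_const_add m x
  exact (((hfl.add hfu).div_const 2).const_sub (f m)).add
    (((hasDerivAt_id x).div_const 2).mul (hf'u.sub hf'l))
    |>.congr_deriv (by simp only [id, Pi.sub_apply]; ring)

theorem continuousOn_bullenError (hr : 0 ≤ r) (hf : ContinuousOn f (Icc (m - r) (m + r))) :
    ContinuousOn (bullenError f m) (Icc 0 r) := by
  have hl : MapsTo (fun x => m - x) (Icc 0 r) (Icc (m - r) (m + r)) :=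
    fun x hx => ⟨by linarith [hx.2], by linarith [hx.1]⟩
  have hu : MapsTo (fun x => m + x) (Icc 0 r) (Icc (m - r) (m + r)) :=
    fun x hx => ⟨by linarith [hx.1], by linarith [hx.2]⟩
  exact ((continuousOn_id.div_const 2).mul ((hf.comp (by fun_prop) hl).add
    (hf.comp (by fun_prop) hu))).add (continuousOn_id.mul continuousOn_const) |>.sub
    (continuousOn_integral_sub_add hr hf)

theorem hasDerivAt_mul_cube (c x : ℝ) : HasDerivAt (fun x => c / 6 * x ^ 3) (c / 2 * x ^ 2) x :=
  (hasDerivAt_pow 3 x).const_mul (c / 6) |>.congr_deriv (by push_cast; ring)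

theorem hasDerivAt_mul_sq (c x : ℝ) : HasDerivAt (fun x => c / 2 * x ^ 2) (c * x) x :=
  (hasDerivAt_pow 2 x).const_mul (c / 2) |>.congr_deriv (by push_cast; ring)

theorem mul_cube_le_bullenError (hr : 0 ≤ r) (hf : ContinuousOn f (Icc (m - r) (m + r)))
    (hf' : ∀ y ∈ Ioo (m - r) (m + r), HasDerivAt f (f' y) y)
    (hf'' : ∀ y ∈ Ioo (m - r) (m + r), HasDerivAt f' (f'' y) y) {c : ℝ}
    (hc : ∀ x ∈ Ioo 0 r, c ≤ (f'' (m + x) + f'' (m - x)) / 2) :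
    c / 6 * r ^ 3 ≤ bullenError f m r :=
  image_le_of_deriv2_le hr (by fun_prop) (continuousOn_bullenError hr hf)
    (fun x _ => hasDerivAt_mul_cube c x)
    (fun x hx => hasDerivAt_bullenError hf' ⟨by linarith [hx.1, hx.2], hx.2⟩)
    (fun x _ => hasDerivAt_mul_sq c x)
    (fun x hx => hasDerivAt_bullenError_deriv hf' hf'' ⟨by linarith [hx.1, hx.2], hx.2⟩)
    (by simp [bullenError]) (by simp) (fun x hx => by nlinarith [hc x hx, hx.1])

theorem bullenError_le_mul_cube (hr : 0 ≤ r) (hf : ContinuousOn f (Icc (m - r) (m + r)))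
    (hf' : ∀ y ∈ Ioo (m - r) (m + r), HasDerivAt f (f' y) y)
    (hf'' : ∀ y ∈ Ioo (m - r) (m + r), HasDerivAt f' (f'' y) y) {c : ℝ}
    (hc : ∀ x ∈ Ioo 0 r, (f'' (m + x) + f'' (m - x)) / 2 ≤ c) :
    bullenError f m r ≤ c / 6 * r ^ 3 :=
  image_le_of_deriv2_le hr (continuousOn_bullenError hr hf) (by fun_prop)
    (fun x hx => hasDerivAt_bullenError hf' ⟨by linarith [hx.1, hx.2], hx.2⟩)
    (fun x _ => hasDerivAt_mul_cube c x)
    (fun x hx => hasDerivAt_bullenError_deriv hf' hf'' ⟨by linarith [hx.1, hx.2], hx.2⟩)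
    (fun x _ => hasDerivAt_mul_sq c x)
    (by simp [bullenError]) (by simp) (fun x hx => by nlinarith [hc x hx, hx.1])

end

theorem stmt_1_general (f : ℝ → ℝ) (I : Set ℝ) (hI : Convex ℝ I)
    (hf : ContDiffOn ℝ 4 f I)
    (hconv'' : ConvexOn ℝ I (deriv (deriv f)))
    (a b : ℝ) (ha : a ∈ I) (hb : b ∈ I) (hab : a < b) :
    (b - a) ^ 2 / 48 * deriv (deriv f) ((a + b) / 2) ≤
      (1 / 4) * (f a + f b) + (1 / 2) * f ((a + b) / 2)
        - (1 / (b - a)) * ∫ t in a..b, f t ∧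
    (1 / 4) * (f a + f b) + (1 / 2) * f ((a + b) / 2)
        - (1 / (b - a)) * ∫ t in a..b, f t ≤
      (b - a) ^ 2 / 96 * (deriv (deriv f) a + deriv (deriv f) b) := by
  obtain ⟨m, r, rfl, rfl⟩ : ∃ m r, a = m - r ∧ b = m + r :=
    ⟨(a + b) / 2, (b - a) / 2, by ring, by ring⟩
  have hr : 0 < r := by linarith
  rw [show (m - r + (m + r)) / 2 = m by ring, show m + r - (m - r) = 2 * r by ring]
  set f'' := deriv (deriv f)
  have hsub : Icc (m - r) (m + r) ⊆ I := hI.ordConnected.out ha hb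
  have hint : Ioo (m - r) (m + r) ⊆ interior I := interior_Icc (a := m - r) ▸ interior_mono hsub
  have hf' : ∀ y ∈ Ioo (m - r) (m + r), HasDerivAt f (deriv f y) y := fun y hy =>
    ((hf.contDiffAt (mem_interior_iff_mem_nhds.1 (hint hy))).differentiableAt
      (by norm_num)).hasDerivAt
  have hf'' : ∀ y ∈ Ioo (m - r) (m + r), HasDerivAt (deriv f) (f'' y) y := fun y hy =>
    (hf.differentiableAt_deriv (by norm_num) (hint hy)).hasDerivAt
  have hlow := mul_cube_le_bullenError hr.le (hf.continuousOn.mono hsub) hf' hf'' fun x hx =>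
    have hx' := sub_mem_Ioo_and_add_mem_Ioo (m := m) ⟨by linarith [hx.1, hx.2], hx.2⟩
    hconv''.map_le_avg_map_sub_add hx.1.le (hsub (Ioo_subset_Icc_self hx'.1))
      (hsub (Ioo_subset_Icc_self hx'.2))
  have hup := bullenError_le_mul_cube hr.le (hf.continuousOn.mono hsub) hf' hf'' fun x hx =>
    hconv''.avg_map_sub_add_le ⟨by linarith [hx.1], hx.2.le⟩ ha hb
  rw [bullenError_eq_mul f hr.ne'] at hlow hup
  constructor
  · refine le_of_mul_le_mul_left ?_ (by positivity : 0 < 2 * r)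
    linear_combination hlow
  · refine le_of_mul_le_mul_left ?_ (by positivity : 0 < 2 * r)
    linear_combination hup

/-- **Theorem 2, first part.** If `f ∈ C⁴(I)` and both `f` and `f''` are convex on the
interval `I`, then for `a, b ∈ I` with `a < b`,
`((b-a)²/48) f''((a+b)/2) ≤ N(1/4,1/2) - (1/(b-a)) ∫_a^b f ≤ ((b-a)²/96)(f''(a)+f''(b))`. -/
theorem stmt_1 (f : ℝ → ℝ) (I : Set ℝ) (hI : Convex ℝ I)
    (hf : ContDiffOn ℝ 4 f I) (hconv : ConvexOn ℝ I f)
    (hconv'' : ConvexOn ℝ I (deriv (deriv f)))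
    (a b : ℝ) (ha : a ∈ I) (hb : b ∈ I) (hab : a < b) :
    (b - a) ^ 2 / 48 * deriv (deriv f) ((a + b) / 2) ≤
      (1 / 4) * (f a + f b) + (1 / 2) * f ((a + b) / 2)
        - (1 / (b - a)) * ∫ t in a..b, f t ∧
    (1 / 4) * (f a + f b) + (1 / 2) * f ((a + b) / 2)
        - (1 / (b - a)) * ∫ t in a..b, f t ≤
      (b - a) ^ 2 / 96 * (deriv (deriv f) a + deriv (deriv f) b) :=
  stmt_1_general f I hI hf hconv'' a b ha hb hab
end

section
/- Let f : ℝ → ℝ be four times continuously differentiable on an interval I, with f convex and its second derivative f'' concave on I. Then for all a, b ∈ I with a < b: ((b-a)^2/96)(f''(a)+f''(b)) ≤ (1/4)(f(a)+f(b)) + (1/2) f((a+b)/2) − (1/(b-a)) ∫_a^b f(t) dt ≤ ((b-a)^2/48) f''((a+b)/2). -/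
/-!
Let `E(f) = bullenGap f a b` be the gap between the two-panel trapezoid rule
`(f a + 2 f m + f b) / 4`, `m = (a + b) / 2`, and the mean of `f` over `[a, b]`. By Hermite–Hadamard
on each half, `E(f) ≥ 0` for convex `f` (Bullen's inequality), so `E` is monotone in `f''`; on the
centred cubics `c/2 (t - m)² + d/6 (t - m)³` it equals `c (b - a)² / 48`. For the lower bound
compare `f` with the cubic whose second derivative is the secant of the concave `f''`. For the upper
bound pass to `f(t) + f(a + b - t)`, whose gap is `2 E(f)` and whose second derivative is at most
`2 f''(m)` by midpoint concavity.
-/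

open MeasureTheory intervalIntegral Set

theorem ConvexOn.le_secant {f : ℝ → ℝ} {s : Set ℝ} (hf : ConvexOn ℝ s f) {x y t : ℝ}
    (hx : x ∈ s) (hy : y ∈ s) (hxt : x ≤ t) (hty : t ≤ y) (hxy : x < y) :
    f t ≤ ((y - t) * f x + (t - x) * f y) / (y - x) := by
  have hyx : 0 < y - x := sub_pos.2 hxy
  have key := hf.2 hx hy (div_nonneg (sub_nonneg.2 hty) hyx.le)
    (div_nonneg (sub_nonneg.2 hxt) hyx.le) (by field_simp; ring)
  have ht : ((y - t) / (y - x)) • x + ((t - x) / (y - x)) • y = t := by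
    simp only [smul_eq_mul]; field_simp; ring
  rw [ht, smul_eq_mul, smul_eq_mul] at key
  exact key.trans_eq (by field_simp)

theorem ConcaveOn.secant_le {g : ℝ → ℝ} {s : Set ℝ} (hg : ConcaveOn ℝ s g) {x y t : ℝ}
    (hx : x ∈ s) (hy : y ∈ s) (hxt : x ≤ t) (hty : t ≤ y) (hxy : x < y) :
    ((y - t) * g x + (t - x) * g y) / (y - x) ≤ g t := by
  have := hg.neg.le_secant hx hy hxt hty hxy
  simp only [Pi.neg_apply] at this
  rw [← neg_le_neg_iff]
  exact this.trans_eq (by ring)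

theorem ConcaveOn.add_le_two_mul_midpoint {g : ℝ → ℝ} {s : Set ℝ} (hg : ConcaveOn ℝ s g)
    {x y : ℝ} (hx : x ∈ s) (hy : y ∈ s) : g x + g y ≤ 2 * g ((x + y) / 2) := by
  have := hg.2 hx hy (by norm_num : (0 : ℝ) ≤ 1 / 2) (by norm_num : (0 : ℝ) ≤ 1 / 2) (by norm_num)
  rw [show (1 / 2 : ℝ) • x + (1 / 2 : ℝ) • y = (x + y) / 2 by simp only [smul_eq_mul]; ring,
    smul_eq_mul, smul_eq_mul] at this
  linarith

theorem integral_secant {x y : ℝ} (hxy : x < y) (A B : ℝ) :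
    ∫ t in x..y, ((y - t) * A + (t - x) * B) / (y - x) = (y - x) * (A + B) / 2 := by
  have : y - x ≠ 0 := sub_ne_zero.2 hxy.ne'
  rw [intervalIntegral.integral_div, integral_add (Continuous.intervalIntegrable (by fun_prop) _ _)
    (Continuous.intervalIntegrable (by fun_prop) _ _)]
  simp [integral_comp_sub_left fun t => t]
  field_simp
  ring

theorem ConvexOn.integral_le_trapezoid_s2 {f : ℝ → ℝ} {x y : ℝ} (hxy : x ≤ y)
    (hf : ConvexOn ℝ (Icc x y) f) (hc : ContinuousOn f (Icc x y)) :
    ∫ t in x..y, f t ≤ (y - x) * (f x + f y) / 2 := by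
  rcases hxy.eq_or_lt with rfl | hxy
  · simp
  calc ∫ t in x..y, f t ≤ ∫ t in x..y, ((y - t) * f x + (t - x) * f y) / (y - x) :=
        integral_mono_on hxy.le (hc.intervalIntegrable_of_Icc hxy.le)
          (Continuous.intervalIntegrable (by fun_prop) _ _) fun t ht =>
            hf.le_secant (left_mem_Icc.2 hxy.le) (right_mem_Icc.2 hxy.le) ht.1 ht.2 hxy
    _ = (y - x) * (f x + f y) / 2 := integral_secant hxy _ _

noncomputable def bullenGap (f : ℝ → ℝ) (a b : ℝ) : ℝ :=
  (1 / 4) * (f a + f b) + (1 / 2) * f ((a + b) / 2) - (1 / (b - a)) * ∫ t in a..b, f t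

section bullenGap

variable {f F f' F' f'' F'' : ℝ → ℝ} {a b : ℝ}

theorem ConvexOn.bullenGap_nonneg (hab : a < b) (hf : ConvexOn ℝ (Icc a b) f)
    (hc : ContinuousOn f (Icc a b)) : 0 ≤ bullenGap f a b := by
  have ham : a ≤ (a + b) / 2 := by linarith
  have hmb : (a + b) / 2 ≤ b := by linarith
  set m := (a + b) / 2 with hm
  have hleft := (hf.subset (Icc_subset_Icc_right hmb) (convex_Icc a m)).integral_le_trapezoid_s2
    ham (hc.mono (Icc_subset_Icc_right hmb))
  have hright := (hf.subset (Icc_subset_Icc_left ham) (convex_Icc m b)).integral_le_trapezoid_s2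
    hmb (hc.mono (Icc_subset_Icc_left ham))
  have hsplit := integral_add_adjacent_intervals
    (ContinuousOn.intervalIntegrable_of_Icc (μ := volume) ham (hc.mono (Icc_subset_Icc_right hmb)))
    (ContinuousOn.intervalIntegrable_of_Icc hmb (hc.mono (Icc_subset_Icc_left ham)))
  have hsum : (∫ t in a..m, f t) + ∫ t in m..b, f t ≤ (b - a) * (f a + 2 * f m + f b) / 4 := by
    rw [show m - a = (b - a) / 2 by rw [hm]; ring] at hleft
    rw [show b - m = (b - a) / 2 by rw [hm]; ring] at hright
    linarith
  have hba : 0 < b - a := sub_pos.2 hab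
  rw [bullenGap, ← hsplit, sub_nonneg]
  calc 1 / (b - a) * ((∫ t in a..m, f t) + ∫ t in m..b, f t)
      ≤ 1 / (b - a) * ((b - a) * (f a + 2 * f m + f b) / 4) := by gcongr
    _ = 1 / 4 * (f a + f b) + 1 / 2 * f m := by field_simp; ring

theorem bullenGap_sub (hf : IntervalIntegrable f volume a b)
    (hF : IntervalIntegrable F volume a b) :
    bullenGap (fun t => f t - F t) a b = bullenGap f a b - bullenGap F a b := by
  simp only [bullenGap, integral_sub hf hF]
  ring

theorem bullenGap_le_bullenGap_of_deriv2_le (hab : a < b)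
    (hf : ContinuousOn f (Icc a b)) (hf' : ∀ x ∈ Ioo a b, HasDerivAt f (f' x) x)
    (hf'' : ∀ x ∈ Ioo a b, HasDerivAt f' (f'' x) x)
    (hF : ContinuousOn F (Icc a b)) (hF' : ∀ x ∈ Ioo a b, HasDerivAt F (F' x) x)
    (hF'' : ∀ x ∈ Ioo a b, HasDerivAt F' (F'' x) x) (hle : ∀ x ∈ Ioo a b, F'' x ≤ f'' x) :
    bullenGap F a b ≤ bullenGap f a b := by
  have hconv : ConvexOn ℝ (Icc a b) fun t => f t - F t := by
    refine convexOn_of_hasDerivWithinAt2_nonneg (f' := fun x => f' x - F' x)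
      (f'' := fun x => f'' x - F'' x) (convex_Icc a b) (hf.sub hF) ?_ ?_ ?_ <;>
      rw [interior_Icc]
    · exact fun x hx => ((hf' x hx).sub (hF' x hx)).hasDerivWithinAt
    · exact fun x hx => ((hf'' x hx).sub (hF'' x hx)).hasDerivWithinAt
    · exact fun x hx => sub_nonneg.2 (hle x hx)
  have := hconv.bullenGap_nonneg hab (hf.sub hF)
  rwa [bullenGap_sub (hf.intervalIntegrable_of_Icc hab.le) (hF.intervalIntegrable_of_Icc hab.le),
    sub_nonneg] at this

theorem bullenGap_centered_cubic (hab : a < b) (c d : ℝ) :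
    bullenGap (fun t => c / 2 * (t - (a + b) / 2) ^ 2 + d / 6 * (t - (a + b) / 2) ^ 3) a b =
      c * (b - a) ^ 2 / 48 := by
  have : b - a ≠ 0 := sub_ne_zero.2 hab.ne'
  rw [bullenGap, integral_add (Continuous.intervalIntegrable (by fun_prop) _ _)
    (Continuous.intervalIntegrable (by fun_prop) _ _)]
  simp [integral_comp_sub_right fun t => t ^ 2, integral_comp_sub_right fun t => t ^ 3]
  field_simp
  ring

theorem hasDerivAt_centered_cubic (c d m x : ℝ) :
    HasDerivAt (fun t => c / 2 * (t - m) ^ 2 + d / 6 * (t - m) ^ 3)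
      (c * (x - m) + d / 2 * (x - m) ^ 2) x := by
  have h := (hasDerivAt_id' x).sub_const m
  refine ((h.fun_pow 2).const_mul (c / 2) |>.fun_add
    ((h.fun_pow 3).const_mul (d / 6))).congr_deriv ?_
  norm_num
  ring

theorem hasDerivAt_centered_quadratic (c d m x : ℝ) :
    HasDerivAt (fun t => c * (t - m) + d / 2 * (t - m) ^ 2) (c + d * (x - m)) x := by
  have h := (hasDerivAt_id' x).sub_const m
  refine (h.const_mul c |>.fun_add ((h.fun_pow 2).const_mul (d / 2))).congr_deriv ?_
  norm_num
  ring

theorem le_bullenGap_of_affine_le_deriv2 (hab : a < b) (c d : ℝ)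
    (hf : ContinuousOn f (Icc a b)) (hf' : ∀ x ∈ Ioo a b, HasDerivAt f (f' x) x)
    (hf'' : ∀ x ∈ Ioo a b, HasDerivAt f' (f'' x) x)
    (hle : ∀ x ∈ Ioo a b, c + d * (x - (a + b) / 2) ≤ f'' x) :
    c * (b - a) ^ 2 / 48 ≤ bullenGap f a b := by
  rw [← bullenGap_centered_cubic hab c d]
  exact bullenGap_le_bullenGap_of_deriv2_le hab hf hf' hf'' (by fun_prop)
    (fun x _ => hasDerivAt_centered_cubic c d _ x)
    (fun x _ => hasDerivAt_centered_quadratic c d _ x) hle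

theorem bullenGap_le_of_deriv2_le_affine (hab : a < b) (c d : ℝ)
    (hf : ContinuousOn f (Icc a b)) (hf' : ∀ x ∈ Ioo a b, HasDerivAt f (f' x) x)
    (hf'' : ∀ x ∈ Ioo a b, HasDerivAt f' (f'' x) x)
    (hle : ∀ x ∈ Ioo a b, f'' x ≤ c + d * (x - (a + b) / 2)) :
    bullenGap f a b ≤ c * (b - a) ^ 2 / 48 := by
  rw [← bullenGap_centered_cubic hab c d]
  exact bullenGap_le_bullenGap_of_deriv2_le hab (by fun_prop)
    (fun x _ => hasDerivAt_centered_cubic c d _ x)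
    (fun x _ => hasDerivAt_centered_quadratic c d _ x) hf hf' hf'' hle

theorem bullenGap_add_comp_reflect (hf : IntervalIntegrable f volume a b) :
    bullenGap (fun t => f t + f (a + b - t)) a b = 2 * bullenGap f a b := by
  have hreflect : IntervalIntegrable (fun t => f (a + b - t)) volume a b := by
    simpa using (hf.comp_sub_left (a + b)).symm
  simp only [bullenGap, integral_add hf hreflect, integral_comp_sub_left, add_sub_cancel_left,
    add_sub_cancel_right]
  ring_nf

theorem bullenGap_le_of_deriv2_add_reflect_le (hab : a < b) (c : ℝ)
    (hf : ContinuousOn f (Icc a b)) (hf' : ∀ x ∈ Ioo a b, HasDerivAt f (f' x) x)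
    (hf'' : ∀ x ∈ Ioo a b, HasDerivAt f' (f'' x) x)
    (hle : ∀ x ∈ Ioo a b, f'' x + f'' (a + b - x) ≤ 2 * c) :
    bullenGap f a b ≤ c * (b - a) ^ 2 / 48 := by
  have hreflect : MapsTo (fun x => a + b - x) (Ioo a b) (Ioo a b) := fun x hx =>
    ⟨by linarith [hx.2], by linarith [hx.1]⟩
  have hcont : ContinuousOn (fun t => f t + f (a + b - t)) (Icc a b) :=
    hf.add (hf.comp (by fun_prop) fun x hx => ⟨by linarith [hx.2], by linarith [hx.1]⟩)
  have hderiv (x) (hx : x ∈ Ioo a b) :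
      HasDerivAt (fun t => f t + f (a + b - t)) (f' x - f' (a + b - x)) x := by
    simpa [sub_eq_add_neg] using
      (hf' x hx).fun_add ((hf' _ (hreflect hx)).comp_const_sub (a + b) x)
  have hderiv2 (x) (hx : x ∈ Ioo a b) :
      HasDerivAt (fun t => f' t - f' (a + b - t)) (f'' x + f'' (a + b - x)) x := by
    simpa using (hf'' x hx).fun_sub ((hf'' _ (hreflect hx)).comp_const_sub (a + b) x)
  have hsym := bullenGap_le_of_deriv2_le_affine hab (2 * c) 0 hcont hderiv hderiv2
    (by simpa using hle)
  rw [bullenGap_add_comp_reflect (hf.intervalIntegrable_of_Icc hab.le)] at hsym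
  linarith

end bullenGap

theorem stmt_2_general (f : ℝ → ℝ) (I : Set ℝ) (hI : Convex ℝ I)
    (hf : ContDiffOn ℝ 4 f I)
    (hconc'' : ConcaveOn ℝ I (deriv (deriv f)))
    (a b : ℝ) (ha : a ∈ I) (hb : b ∈ I) (hab : a < b) :
    (b - a) ^ 2 / 96 * (deriv (deriv f) a + deriv (deriv f) b) ≤
      (1 / 4) * (f a + f b) + (1 / 2) * f ((a + b) / 2)
        - (1 / (b - a)) * ∫ t in a..b, f t ∧
    (1 / 4) * (f a + f b) + (1 / 2) * f ((a + b) / 2)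
        - (1 / (b - a)) * ∫ t in a..b, f t ≤
      (b - a) ^ 2 / 48 * deriv (deriv f) ((a + b) / 2) := by
  set g := deriv (deriv f)
  have hIcc : Icc a b ⊆ I := hI.ordConnected.out ha hb
  have hIoo : Ioo a b ⊆ interior I := by simpa using interior_mono hIcc
  have hdiff (u : ℝ → ℝ) (hu : ContDiffOn ℝ 1 u (interior I)) (x : ℝ) (hx : x ∈ Ioo a b) :
      HasDerivAt u (deriv u x) x :=
    ((hu.contDiffAt (isOpen_interior.mem_nhds (hIoo hx))).differentiableAt one_ne_zero).hasDerivAt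
  have hf_int : ContDiffOn ℝ 4 f (interior I) := hf.mono interior_subset
  have hf' := hdiff f (hf_int.of_le (by norm_num))
  have hf'' := hdiff (deriv f) (hf_int.deriv_of_isOpen isOpen_interior (by norm_num))
  have hcont : ContinuousOn f (Icc a b) := hf.continuousOn.mono hIcc
  constructor
  · have hba : b - a ≠ 0 := sub_ne_zero.2 hab.ne'
    calc (b - a) ^ 2 / 96 * (g a + g b) = (g a + g b) / 2 * (b - a) ^ 2 / 48 := by ring
      _ ≤ bullenGap f a b := by
        refine le_bullenGap_of_affine_le_deriv2 hab _ ((g b - g a) / (b - a)) hcont hf' hf''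
          fun x hx => le_of_eq_of_le ?_ (hconc''.secant_le ha hb hx.1.le hx.2.le hab)
        field_simp
        ring
  · calc bullenGap f a b ≤ g ((a + b) / 2) * (b - a) ^ 2 / 48 :=
          bullenGap_le_of_deriv2_add_reflect_le hab _ hcont hf' hf'' fun x hx =>
            (hconc''.add_le_two_mul_midpoint (hIcc (Ioo_subset_Icc_self hx))
              (hIcc ⟨by linarith [hx.2], by linarith [hx.1]⟩)).trans_eq (by rw [add_sub_cancel])
      _ = (b - a) ^ 2 / 48 * g ((a + b) / 2) := by ring

/-- **Theorem 2, second part.** If `f ∈ C⁴(I)`, `f` is convex and `f''` is concave on the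
interval `I`, then for `a, b ∈ I` with `a < b`,
`((b-a)²/96)(f''(a)+f''(b)) ≤ N(1/4,1/2) - (1/(b-a)) ∫_a^b f ≤ ((b-a)²/48) f''((a+b)/2)`. -/
theorem stmt_2 (f : ℝ → ℝ) (I : Set ℝ) (hI : Convex ℝ I)
    (hf : ContDiffOn ℝ 4 f I) (hconv : ConvexOn ℝ I f)
    (hconc'' : ConcaveOn ℝ I (deriv (deriv f)))
    (a b : ℝ) (ha : a ∈ I) (hb : b ∈ I) (hab : a < b) :
    (b - a) ^ 2 / 96 * (deriv (deriv f) a + deriv (deriv f) b) ≤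
      (1 / 4) * (f a + f b) + (1 / 2) * f ((a + b) / 2)
        - (1 / (b - a)) * ∫ t in a..b, f t ∧
    (1 / 4) * (f a + f b) + (1 / 2) * f ((a + b) / 2)
        - (1 / (b - a)) * ∫ t in a..b, f t ≤
      (b - a) ^ 2 / 48 * deriv (deriv f) ((a + b) / 2) :=
  stmt_2_general f I hI hf hconc'' a b ha hb hab
end

section
/- Let f : ℝ → ℝ be four times continuously differentiable on an interval I and let a, b ∈ I with a < b. Then (1/4)(f(a)+f(b)) + (1/2) f((a+b)/2) − (1/(b-a)) ∫_a^b f(t) dt = ((b-a)^2/16) ∫_0^1 t(1−t) [ f''(a·t/2 + b(1−t/2)) + f''(b·t/2 + a(1−t/2)) ] dt. -/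
/-!
Both curves parametrise the halves of `[a, b]`, from an endpoint to the midpoint `m`. On a
segment `[u, v]`, two integrations by parts against the kernel `t (1 - t)`, which vanishes at
both ends, give
`(v - u)³ ∫₀¹ t (1 - t) f''(u + (v - u) t) dt = (v - u) (f u + f v) - 2 ∫ᵤᵛ f`.
Adding the identities for `[b, m]` and `[a, m]` yields the theorem, as `∫ₐᵐ f + ∫ₘᵇ f = ∫ₐᵇ f`.
The integrations by parts use the second derivative within the closed segment, which is
continuous up to the endpoints and agrees with `deriv (deriv f)` on the open segment.
-/

open MeasureTheory intervalIntegral Set Topology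

theorem add_sub_mul_mem_uIcc {u v t : ℝ} (ht : t ∈ Icc 0 1) : u + (v - u) * t ∈ uIcc u v := by
  rw [← segment_eq_uIcc, segment_eq_image']
  exact ⟨t, ht, by simp [mul_comm]⟩

theorem add_sub_mul_mem_uIoo {u v t : ℝ} (huv : u ≠ v) (ht : t ∈ Ioo 0 1) :
    u + (v - u) * t ∈ uIoo u v := by
  rw [← Ioo_min_max, ← openSegment_eq_Ioo' huv, openSegment_eq_image']
  exact ⟨t, ht, by simp [mul_comm]⟩

theorem integral_mul_one_sub_mul_of_hasDerivAt {φ φ' φ'' : ℝ → ℝ}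
    (hφ : ContinuousOn φ (Icc 0 1)) (hφ' : ContinuousOn φ' (Icc 0 1))
    (hφ'' : ContinuousOn φ'' (Icc 0 1))
    (hd : ∀ t ∈ Ioo (0 : ℝ) 1, HasDerivAt φ (φ' t) t)
    (hd' : ∀ t ∈ Ioo (0 : ℝ) 1, HasDerivAt φ' (φ'' t) t) :
    ∫ t in (0 : ℝ)..1, t * (1 - t) * φ'' t =
      φ 0 + φ 1 - 2 * ∫ t in (0 : ℝ)..1, φ t := by
  have hφi : IntervalIntegrable φ volume 0 1 := hφ.intervalIntegrable_of_Icc zero_le_one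
  -- an antiderivative of the integrand, found by integrating by parts twice
  let F : ℝ → ℝ := fun t ↦
    t * (1 - t) * φ' t - (1 - 2 * t) * φ t - 2 * ∫ s in (0 : ℝ)..t, φ s
  have hF : ContinuousOn F (Icc 0 1) := by
    have hprim := continuousOn_primitive_interval' hφi left_mem_uIcc
    rw [uIcc_of_le zero_le_one] at hprim
    fun_prop (disch := assumption)
  have hF' : ∀ t ∈ Ioo (0 : ℝ) 1, HasDerivAt F (t * (1 - t) * φ'' t) t := by
    intro t ht
    have hφt : ContinuousAt φ t := hφ.continuousAt (Icc_mem_nhds ht.1 ht.2)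
    have hprim : HasDerivAt (fun u ↦ ∫ s in (0 : ℝ)..u, φ s) (φ t) t :=
      integral_hasDerivAt_right
        ((hφ.mono (Icc_subset_Icc_right ht.2.le)).intervalIntegrable_of_Icc ht.1.le)
        ((hφ.mono Ioo_subset_Icc_self).stronglyMeasurableAtFilter isOpen_Ioo t ht) hφt
    have hFt := ((((hasDerivAt_id t).mul ((hasDerivAt_const t 1).sub (hasDerivAt_id t))).mul
      (hd' t ht)).sub (((hasDerivAt_const t 1).sub ((hasDerivAt_id t).const_mul 2)).mul
      (hd t ht))).sub (hprim.const_mul 2)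
    refine hFt.congr_deriv ?_
    simp only [Pi.sub_apply, Pi.mul_apply, id]
    ring
  have hint : IntervalIntegrable (fun t ↦ t * (1 - t) * φ'' t) volume 0 1 :=
    ContinuousOn.intervalIntegrable_of_Icc zero_le_one (by fun_prop)
  rw [integral_eq_sub_of_hasDerivAt_of_le zero_le_one hF hF' hint]
  simp only [F, integral_same]
  ring

theorem integral_mul_one_sub_mul_comp_of_hasDerivAt {f f' f'' : ℝ → ℝ} {u v : ℝ}
    (hf : ContinuousOn f (uIcc u v)) (hf' : ContinuousOn f' (uIcc u v))
    (hf'' : ContinuousOn f'' (uIcc u v))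
    (hd : ∀ x ∈ uIoo u v, HasDerivAt f (f' x) x)
    (hd' : ∀ x ∈ uIoo u v, HasDerivAt f' (f'' x) x) :
    (v - u) ^ 3 * ∫ t in (0 : ℝ)..1, t * (1 - t) * f'' (u + (v - u) * t) =
      (v - u) * (f u + f v) - 2 * ∫ x in u..v, f x := by
  rcases eq_or_ne u v with rfl | huv
  · simp
  let γ : ℝ → ℝ := fun t ↦ u + (v - u) * t
  have hγ : ∀ t, HasDerivAt γ (v - u) t := fun t ↦
    (((hasDerivAt_id t).const_mul (v - u)).const_add u).congr_deriv (mul_one _)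
  have hIcc : MapsTo γ (Icc 0 1) (uIcc u v) := fun _ ↦ add_sub_mul_mem_uIcc
  have hIoo : MapsTo γ (Ioo 0 1) (uIoo u v) := fun _ ↦ add_sub_mul_mem_uIoo huv
  have hγc : ContinuousOn γ (Icc 0 1) := by fun_prop
  have key := integral_mul_one_sub_mul_of_hasDerivAt (φ := f ∘ γ)
    (φ' := fun t ↦ (v - u) * f' (γ t)) (φ'' := fun t ↦ (v - u) * ((v - u) * f'' (γ t)))
    (hf.comp hγc hIcc) (continuousOn_const.mul (hf'.comp hγc hIcc))
    (continuousOn_const.mul (continuousOn_const.mul (hf''.comp hγc hIcc)))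
    (fun t ht ↦ by simpa [mul_comm] using (hd _ (hIoo ht)).comp t (hγ t))
    (fun t ht ↦ by simpa [mul_comm] using ((hd' _ (hIoo ht)).comp t (hγ t)).const_mul (v - u))
  have hcov : ∫ t in (0 : ℝ)..1, f (γ t) = (v - u)⁻¹ * ∫ x in u..v, f x := by
    simp [γ, integral_comp_add_mul _ (sub_ne_zero.2 huv.symm)]
  have hlhs : ∫ t in (0 : ℝ)..1, t * (1 - t) * ((v - u) * ((v - u) * f'' (γ t))) =
      (v - u) ^ 2 * ∫ t in (0 : ℝ)..1, t * (1 - t) * f'' (u + (v - u) * t) := by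
    rw [← intervalIntegral.integral_const_mul]
    congr 1 with t
    ring
  simp only [hlhs, Function.comp_apply, hcov] at key
  simp only [γ, mul_zero, add_zero, mul_one, add_sub_cancel] at key
  have hvu : v - u ≠ 0 := sub_ne_zero.2 huv.symm
  field_simp at key
  linear_combination key

theorem deriv_deriv_eq_derivWithin_derivWithin {𝕜 F : Type*} [NontriviallyNormedField 𝕜]
    [NormedAddCommGroup F] [NormedSpace 𝕜 F] {f : 𝕜 → F} {s : Set 𝕜} {x : 𝕜} (hs : s ∈ 𝓝 x) :
    deriv (deriv f) x = derivWithin (derivWithin f s) s x := by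
  have h : derivWithin f s =ᶠ[𝓝 x] deriv f :=
    (eventually_mem_nhds_iff.2 hs).mono fun _ ↦ derivWithin_of_mem_nhds
  rw [derivWithin_of_mem_nhds hs, h.deriv_eq]

theorem ContDiffOn.hasDerivAt_derivWithin {𝕜 F : Type*} [NontriviallyNormedField 𝕜]
    [NormedAddCommGroup F] [NormedSpace 𝕜 F] {f : 𝕜 → F} {s : Set 𝕜} {x : 𝕜}
    {n : WithTop ℕ∞} (hf : ContDiffOn 𝕜 n f s) (hn : n ≠ 0) (hs : s ∈ 𝓝 x) :
    HasDerivAt f (derivWithin f s x) x := by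
  rw [derivWithin_of_mem_nhds hs]
  exact ((hf.differentiableOn hn).differentiableAt hs).hasDerivAt

theorem eqOn_deriv_deriv_comp_add_sub_mul {f : ℝ → ℝ} {u v : ℝ} (huv : u ≠ v) :
    EqOn (fun t ↦ t * (1 - t) * deriv (deriv f) (u + (v - u) * t))
      (fun t ↦ t * (1 - t) * derivWithin (derivWithin f (uIcc u v)) (uIcc u v) (u + (v - u) * t))
      (Ioo 0 1) := fun t ht ↦ by
  have hx := add_sub_mul_mem_uIoo huv ht
  exact congrArg (t * (1 - t) * ·)
    (deriv_deriv_eq_derivWithin_derivWithin (Icc_mem_nhds hx.1 hx.2))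

theorem integral_mul_one_sub_mul_deriv_deriv_comp {f : ℝ → ℝ} {u v : ℝ}
    (hf : ContDiffOn ℝ 2 f (uIcc u v)) :
    (v - u) ^ 3 * ∫ t in (0 : ℝ)..1, t * (1 - t) * deriv (deriv f) (u + (v - u) * t) =
      (v - u) * (f u + f v) - 2 * ∫ x in u..v, f x := by
  rcases eq_or_ne u v with rfl | huv
  · simp
  have hs : UniqueDiffOn ℝ (uIcc u v) := uniqueDiffOn_Icc (min_lt_max.2 huv)
  have hf1 : ContDiffOn ℝ 1 (derivWithin f (uIcc u v)) (uIcc u v) := hf.derivWithin hs le_rfl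
  rw [integral_congr_Ioo_of_le zero_le_one (eqOn_deriv_deriv_comp_add_sub_mul huv)]
  exact integral_mul_one_sub_mul_comp_of_hasDerivAt hf.continuousOn hf1.continuousOn
    (hf1.continuousOn_derivWithin hs le_rfl)
    (fun x hx ↦ hf.hasDerivAt_derivWithin two_ne_zero (Icc_mem_nhds hx.1 hx.2))
    (fun x hx ↦ hf1.hasDerivAt_derivWithin one_ne_zero (Icc_mem_nhds hx.1 hx.2))

theorem intervalIntegrable_mul_one_sub_mul_deriv_deriv_comp {f : ℝ → ℝ} {u v : ℝ}
    (hf : ContDiffOn ℝ 2 f (uIcc u v)) :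
    IntervalIntegrable (fun t ↦ t * (1 - t) * deriv (deriv f) (u + (v - u) * t)) volume 0 1 := by
  rcases eq_or_ne u v with rfl | huv
  · simpa using (by fun_prop : Continuous fun t : ℝ ↦ t * (1 - t) * deriv (deriv f) u)
      |>.intervalIntegrable 0 1
  have hs : UniqueDiffOn ℝ (uIcc u v) := uniqueDiffOn_Icc (min_lt_max.2 huv)
  have hg : ContinuousOn (derivWithin (derivWithin f (uIcc u v)) (uIcc u v)) (uIcc u v) :=
    (hf.derivWithin hs le_rfl).continuousOn_derivWithin hs le_rfl
  have hcont : ContinuousOn (fun t ↦ t * (1 - t) *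
      derivWithin (derivWithin f (uIcc u v)) (uIcc u v) (u + (v - u) * t)) (Icc 0 1) :=
    (by fun_prop : ContinuousOn (fun t : ℝ ↦ t * (1 - t)) _).mul
      (hg.comp (by fun_prop) fun _ ↦ add_sub_mul_mem_uIcc)
  refine (hcont.intervalIntegrable_of_Icc zero_le_one).congr_uIoo ?_
  rw [uIoo_of_le zero_le_one]
  exact (eqOn_deriv_deriv_comp_add_sub_mul huv).symm

/-- **Lemma 2.** If `f ∈ C⁴(I)` and `a, b ∈ I` with `a < b`, then
`N(1/4,1/2) - (1/(b-a)) ∫_a^b f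
  = ((b-a)²/16) ∫_0^1 t(1-t)[f''(a t/2 + b(1-t/2)) + f''(b t/2 + a(1-t/2))] dt`. -/
theorem stmt_4 (f : ℝ → ℝ) (I : Set ℝ) (hI : Convex ℝ I)
    (hf : ContDiffOn ℝ 4 f I)
    (a b : ℝ) (ha : a ∈ I) (hb : b ∈ I) (hab : a < b) :
    (1 / 4) * (f a + f b) + (1 / 2) * f ((a + b) / 2)
      - (1 / (b - a)) * ∫ t in a..b, f t =
    (b - a) ^ 2 / 16 * ∫ t in (0:ℝ)..1, t * (1 - t) *
      (deriv (deriv f) (a * (t / 2) + b * (1 - t / 2))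
        + deriv (deriv f) (b * (t / 2) + a * (1 - t / 2))) := by
  set m := (a + b) / 2 with hm_def
  have hm : m ∈ Icc a b := by rw [hm_def]; constructor <;> linarith
  have hf2 : ContDiffOn ℝ 2 f (Icc a b) :=
    (hf.mono (hI.ordConnected.out ha hb)).of_le (by norm_num)
  have hfb : ContDiffOn ℝ 2 f (uIcc b m) :=
    hf2.mono (uIcc_subset_Icc (right_mem_Icc.2 hab.le) hm)
  have hfa : ContDiffOn ℝ 2 f (uIcc a m) :=
    hf2.mono (uIcc_subset_Icc (left_mem_Icc.2 hab.le) hm)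
  have hx : ∀ t, a * (t / 2) + b * (1 - t / 2) = b + (m - b) * t := fun t ↦ by ring
  have hy : ∀ t, b * (t / 2) + a * (1 - t / 2) = a + (m - a) * t := fun t ↦ by ring
  simp only [hx, hy, mul_add]
  rw [integral_add (intervalIntegrable_mul_one_sub_mul_deriv_deriv_comp hfb)
    (intervalIntegrable_mul_one_sub_mul_deriv_deriv_comp hfa)]
  have hJb := integral_mul_one_sub_mul_deriv_deriv_comp hfb
  have hJa := integral_mul_one_sub_mul_deriv_deriv_comp hfa
  have hsplit := integral_add_adjacent_intervals (μ := volume)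
    (hf2.continuousOn.mono (uIcc_subset_Icc (left_mem_Icc.2 hab.le) hm)).intervalIntegrable
    (hf2.continuousOn.mono (uIcc_subset_Icc hm (right_mem_Icc.2 hab.le))).intervalIntegrable
  rw [integral_symm m b] at hJb
  generalize (∫ t in (0 : ℝ)..1, t * (1 - t) * deriv (deriv f) (b + (m - b) * t)) = Jb
    at hJb ⊢
  generalize (∫ t in (0 : ℝ)..1, t * (1 - t) * deriv (deriv f) (a + (m - a) * t)) = Ja
    at hJa ⊢
  rw [show m - b = -((b - a) / 2) by ring] at hJb
  rw [show m - a = (b - a) / 2 by ring] at hJa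
  have hba : b - a ≠ 0 := sub_ne_zero.2 hab.ne'
  rw [← hsplit]
  field_simp
  linear_combination 64 * hJb - 64 * hJa
end

section
/- Let f : ℝ → ℝ be four times continuously differentiable on an interval I with f'' convex on I. Then for all a, b ∈ I with a < b: (1/(b-a)) ∫_a^b f(t) dt ≤ (1/6)(f(a)+f(b)) + (2/3) f((a+b)/2). -/
/-!
Write `a = m - r`, `b = m + r` and fold the integral onto `[0, r]`: with
`φ u = f (m + u) + f (m - u)` the claim becomes `∫₀ʳ φ ≤ r/3 (φ r + 2 φ 0)`.
Integrating by parts twice against the kernel `k u = (r - u)(r - 3u)` gives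
`6 ∫₀ʳ φ = ∫₀ʳ k φ'' + 2r φ r + 4r φ 0` because `φ' 0 = 0`. Convexity of `f''` makes
`φ'' u = f'' (m + u) + f'' (m - u)` nondecreasing, and since `k` has mean zero on `[0, r]`
and changes sign exactly at `r / 3`, `∫₀ʳ k φ'' = ∫₀ʳ k (φ'' - φ'' (r/3)) ≤ 0`.
-/

open MeasureTheory intervalIntegral Set Topology

theorem ConvexOn.monotoneOn_comp_add_add_comp_sub {g : ℝ → ℝ} {m r : ℝ}
    (hg : ConvexOn ℝ (Icc (m - r) (m + r)) g) :
    MonotoneOn (fun u => g (m + u) + g (m - u)) (Icc 0 r) := by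
  rintro x ⟨hx0, -⟩ y ⟨-, hyr⟩ hxy
  rcases hxy.eq_or_lt with rfl | hxy
  · rfl
  have hy : 0 < y := hx0.trans_lt hxy
  have hlo : m - y ∈ Icc (m - r) (m + r) := ⟨by linarith, by linarith⟩
  have hhi : m + y ∈ Icc (m - r) (m + r) := ⟨by linarith, by linarith⟩
  -- `m + x` and `m - x` are convex combinations of `m - y` and `m + y` with swapped weights
  set p := (y - x) / (2 * y)
  set q := (y + x) / (2 * y)
  have hp : 0 ≤ p := div_nonneg (by linarith) (by linarith)
  have hq : 0 ≤ q := div_nonneg (by linarith) (by linarith)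
  have hpq : p + q = 1 := by simp only [p, q]; field_simp; ring
  have hplus := hg.2 hlo hhi hp hq hpq
  have hminus := hg.2 hlo hhi hq hp (by rw [add_comm, hpq])
  have eplus : p • (m - y) + q • (m + y) = m + x := by
    simp only [p, q, smul_eq_mul]; field_simp; ring
  have eminus : q • (m - y) + p • (m + y) = m - x := by
    simp only [p, q, smul_eq_mul]; field_simp; ring
  rw [eplus] at hplus
  rw [eminus] at hminus
  simp only [smul_eq_mul] at hplus hminus
  show g (m + x) + g (m - x) ≤ g (m + y) + g (m - y)
  linear_combination hplus + hminus + (g (m - y) + g (m + y)) * hpq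

theorem integral_sub_mul_sub_three_mul (r : ℝ) :
    ∫ u in (0 : ℝ)..r, (r - u) * (r - 3 * u) = 0 := by
  have h (u : ℝ) :
      HasDerivAt (fun u => r ^ 2 * u - 2 * r * u ^ 2 + u ^ 3) ((r - u) * (r - 3 * u)) u := by
    refine ((((hasDerivAt_id' u).const_mul (r ^ 2)).sub
      ((hasDerivAt_pow 2 u).const_mul (2 * r))).add (hasDerivAt_pow 3 u)).congr_deriv ?_
    push_cast; ring
  rw [integral_eq_sub_of_hasDerivAt (fun u _ => h u)
    (Continuous.intervalIntegrable (by fun_prop) _ _)]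
  ring

theorem integral_sub_mul_sub_three_mul_mul_nonpos {ψ : ℝ → ℝ} {r : ℝ} (hr : 0 ≤ r)
    (hψ : MonotoneOn ψ (Icc 0 r)) :
    ∫ u in (0 : ℝ)..r, (r - u) * (r - 3 * u) * ψ u ≤ 0 := by
  have hk : Continuous fun u : ℝ => (r - u) * (r - 3 * u) := by fun_prop
  have hψi : IntervalIntegrable ψ volume 0 r := by
    apply MonotoneOn.intervalIntegrable; rwa [uIcc_of_le hr]
  have hr3 : r / 3 ∈ Icc 0 r := ⟨by linarith, by linarith⟩
  have hshift : ∫ u in (0 : ℝ)..r, (r - u) * (r - 3 * u) * ψ u =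
      -∫ u in (0 : ℝ)..r, (r - u) * (r - 3 * u) * (ψ (r / 3) - ψ u) := by
    simp_rw [mul_sub _ (ψ (r / 3))]
    rw [integral_sub (hk.intervalIntegrable _ _ |>.mul_const _)
        (hψi.continuousOn_mul hk.continuousOn),
      intervalIntegral.integral_mul_const, integral_sub_mul_sub_three_mul, zero_mul, zero_sub,
      neg_neg]
  rw [hshift, neg_nonpos]
  refine integral_nonneg hr fun u hu => ?_
  rcases le_total u (r / 3) with hu3 | hu3
  · exact mul_nonneg (mul_nonneg (by linarith [hu.2]) (by linarith))
      (sub_nonneg.2 (hψ ⟨hu.1, hu3.trans hr3.2⟩ hr3 hu3))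
  · exact mul_nonneg_of_nonpos_of_nonpos
      (mul_nonpos_of_nonneg_of_nonpos (by linarith [hu.2]) (by linarith))
      (sub_nonpos.2 (hψ hr3 hu hu3))

theorem integral_le_of_deriv_eq_zero_of_monotoneOn_deriv2 {φ φ' ψ : ℝ → ℝ} {r : ℝ}
    (hr : 0 ≤ r) (hφ : ContinuousOn φ (Icc 0 r)) (hφ' : ContinuousOn φ' (Icc 0 r))
    (hdφ : ∀ u ∈ Ioo 0 r, HasDerivAt φ (φ' u) u)
    (hdφ' : ∀ u ∈ Ioo 0 r, HasDerivAt φ' (ψ u) u)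
    (hφ'0 : φ' 0 = 0) (hψ : MonotoneOn ψ (Icc 0 r)) :
    ∫ u in (0 : ℝ)..r, φ u ≤ r / 3 * (φ r + 2 * φ 0) := by
  have hk : Continuous fun u : ℝ => (r - u) * (r - 3 * u) := by fun_prop
  have hψi : IntervalIntegrable ψ volume 0 r := by
    apply MonotoneOn.intervalIntegrable; rwa [uIcc_of_le hr]
  have hφi : IntervalIntegrable φ volume 0 r := by
    apply ContinuousOn.intervalIntegrable; rwa [uIcc_of_le hr]
  have hkψi := hψi.continuousOn_mul hk.continuousOn
  -- `W' = k ψ - 6 φ`: both integrations by parts against `k` at once, as `k' = 6 u - 4 r`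
  set W : ℝ → ℝ := fun u => (r - u) * (r - 3 * u) * φ' u - (6 * u - 4 * r) * φ u
  have hW : ContinuousOn W (Icc 0 r) :=
    (hk.continuousOn.mul hφ').sub (ContinuousOn.mul (by fun_prop) hφ)
  have hdW : ∀ u ∈ Ioo 0 r, HasDerivAt W ((r - u) * (r - 3 * u) * ψ u - 6 * φ u) u := by
    intro u hu
    have hdk : HasDerivAt (fun u : ℝ => (r - u) * (r - 3 * u)) (6 * u - 4 * r) u :=
      (((hasDerivAt_id' u).const_sub r).mul
        (((hasDerivAt_id' u).const_mul 3).const_sub r)).congr_deriv (by ring)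
    refine ((hdk.mul (hdφ' u hu)).sub ((((hasDerivAt_id' u).const_mul 6).sub_const (4 * r)).mul
      (hdφ u hu))).congr_deriv ?_
    ring
  have hparts := integral_eq_sub_of_hasDerivAt_of_le hr hW hdW (hkψi.sub (hφi.const_mul 6))
  rw [integral_sub hkψi (hφi.const_mul 6), intervalIntegral.integral_const_mul] at hparts
  simp only [W, hφ'0] at hparts
  linarith [integral_sub_mul_sub_three_mul_mul_nonpos hr hψ]

theorem integral_eq_integral_comp_add_add_comp_sub {f : ℝ → ℝ} {m r : ℝ} (hr : 0 ≤ r)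
    (hf : IntervalIntegrable f volume (m - r) (m + r)) :
    ∫ t in (m - r)..(m + r), f t = ∫ u in (0 : ℝ)..r, (f (m + u) + f (m - u)) := by
  have hm : m ∈ uIcc (m - r) (m + r) := by
    rw [uIcc_of_le (by linarith)]; constructor <;> linarith
  have hleft : IntervalIntegrable f volume (m - r) m := hf.mono_set (uIcc_subset_uIcc_left hm)
  have hright : IntervalIntegrable f volume m (m + r) := hf.mono_set (uIcc_subset_uIcc_right hm)
  rw [intervalIntegral.integral_add (by simpa using hright.comp_add_left m)
      (by simpa using (hleft.comp_sub_left m).symm),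
    integral_comp_add_left, integral_comp_sub_left, add_zero, sub_zero,
    ← integral_add_adjacent_intervals hleft hright, add_comm]

section Icc

variable {f : ℝ → ℝ} {a b x : ℝ}

theorem ContDiffOn.hasDerivAt_derivWithin_Icc (hf : ContDiffOn ℝ 1 f (Icc a b))
    (hx : x ∈ Ioo a b) : HasDerivAt f (derivWithin f (Icc a b) x) x := by
  have hmem : Icc a b ∈ 𝓝 x := Icc_mem_nhds hx.1 hx.2
  rw [derivWithin_of_mem_nhds hmem]
  exact ((hf.differentiableOn one_ne_zero x (Ioo_subset_Icc_self hx)).differentiableAt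
    hmem).hasDerivAt

theorem ContDiffOn.hasDerivAt_derivWithin_Icc_deriv_deriv (hf : ContDiffOn ℝ 2 f (Icc a b))
    (hx : x ∈ Ioo a b) : HasDerivAt (derivWithin f (Icc a b)) (deriv (deriv f) x) x := by
  have heq : derivWithin f (Icc a b) =ᶠ[𝓝 x] deriv f := by
    filter_upwards [Ioo_mem_nhds hx.1 hx.2] with y hy
    exact derivWithin_of_mem_nhds (Icc_mem_nhds hy.1 hy.2)
  have hderiv : ContDiffOn ℝ 1 (deriv f) (Ioo a b) :=
    (hf.mono Ioo_subset_Icc_self).deriv_of_isOpen isOpen_Ioo (by norm_num)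
  exact ((hderiv.differentiableOn one_ne_zero x hx).differentiableAt
    (Ioo_mem_nhds hx.1 hx.2)).hasDerivAt.congr_of_eventuallyEq heq

end Icc

theorem integral_le_simpson_of_convexOn_deriv_deriv {f : ℝ → ℝ} {a b : ℝ} (hab : a < b)
    (hf : ContDiffOn ℝ 2 f (Icc a b)) (hconv : ConvexOn ℝ (Icc a b) (deriv (deriv f))) :
    ∫ t in a..b, f t ≤ (b - a) / 6 * (f a + f b + 4 * f ((a + b) / 2)) := by
  obtain ⟨m, r, rfl, rfl⟩ : ∃ m r, a = m - r ∧ b = m + r :=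
    ⟨(a + b) / 2, (b - a) / 2, by ring, by ring⟩
  have hr : 0 < r := by linarith
  set F := derivWithin f (Icc (m - r) (m + r))
  have hF : ContinuousOn F (Icc (m - r) (m + r)) :=
    hf.continuousOn_derivWithin (uniqueDiffOn_Icc hab) (by norm_num)
  have hIcc (u : ℝ) (hu : u ∈ Icc 0 r) :
      m + u ∈ Icc (m - r) (m + r) ∧ m - u ∈ Icc (m - r) (m + r) :=
    ⟨⟨by linarith [hu.1], by linarith [hu.2]⟩, ⟨by linarith [hu.2], by linarith [hu.1]⟩⟩
  have hIoo (u : ℝ) (hu : u ∈ Ioo 0 r) :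
      m + u ∈ Ioo (m - r) (m + r) ∧ m - u ∈ Ioo (m - r) (m + r) :=
    ⟨⟨by linarith [hu.1], by linarith [hu.2]⟩, ⟨by linarith [hu.2], by linarith [hu.1]⟩⟩
  have hf₁ : ContDiffOn ℝ 1 f (Icc (m - r) (m + r)) := hf.of_le (by norm_num)
  have hdφ (u : ℝ) (hu : u ∈ Ioo 0 r) :
      HasDerivAt (fun u => f (m + u) + f (m - u)) (F (m + u) - F (m - u)) u :=
    ((hf₁.hasDerivAt_derivWithin_Icc (hIoo u hu).1).comp_const_add m u |>.add
      ((hf₁.hasDerivAt_derivWithin_Icc (hIoo u hu).2).comp_const_sub m u)).congr_deriv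
      (sub_eq_add_neg _ _).symm
  have hdφ' (u : ℝ) (hu : u ∈ Ioo 0 r) : HasDerivAt (fun u => F (m + u) - F (m - u))
      (deriv (deriv f) (m + u) + deriv (deriv f) (m - u)) u :=
    ((hf.hasDerivAt_derivWithin_Icc_deriv_deriv (hIoo u hu).1).comp_const_add m u |>.sub
      ((hf.hasDerivAt_derivWithin_Icc_deriv_deriv (hIoo u hu).2).comp_const_sub m u)).congr_deriv
      (sub_neg_eq_add _ _)
  have hfold := integral_le_of_deriv_eq_zero_of_monotoneOn_deriv2
    (φ := fun u => f (m + u) + f (m - u)) hr.le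
    ((hf.continuousOn.comp (by fun_prop) fun u hu => (hIcc u hu).1).add
      (hf.continuousOn.comp (by fun_prop) fun u hu => (hIcc u hu).2))
    ((hF.comp (by fun_prop) fun u hu => (hIcc u hu).1).sub
      (hF.comp (by fun_prop) fun u hu => (hIcc u hu).2))
    hdφ hdφ' (by simp) hconv.monotoneOn_comp_add_add_comp_sub
  rw [integral_eq_integral_comp_add_add_comp_sub hr.le
    (hf.continuousOn.intervalIntegrable_of_Icc (by linarith)),
    show (m - r + (m + r)) / 2 = m by ring]
  simp only [add_zero, sub_zero] at hfold
  convert hfold using 1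
  ring

/-- **Theorem 3, first part.** If `f ∈ C⁴(I)` and `f''` is convex on the interval `I`,
then for `a, b ∈ I` with `a < b`,
`(1/(b-a)) ∫_a^b f ≤ (1/6)(f a + f b) + (2/3) f((a+b)/2)`. -/
theorem stmt_5 (f : ℝ → ℝ) (I : Set ℝ) (hI : Convex ℝ I)
    (hf : ContDiffOn ℝ 4 f I) (hconv'' : ConvexOn ℝ I (deriv (deriv f)))
    (a b : ℝ) (ha : a ∈ I) (hb : b ∈ I) (hab : a < b) :
    (1 / (b - a)) * ∫ t in a..b, f t ≤
      (1 / 6) * (f a + f b) + (2 / 3) * f ((a + b) / 2) := by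
  have hIcc : Icc a b ⊆ I := hI.ordConnected.out ha hb
  have hsimpson := integral_le_simpson_of_convexOn_deriv_deriv hab
    ((hf.mono hIcc).of_le (by norm_num)) (hconv''.subset hIcc (convex_Icc a b))
  rw [one_div, inv_mul_le_iff₀ (sub_pos.2 hab)]
  exact hsimpson.trans_eq (by ring)
end

section
/- Let f : ℝ → ℝ be four times continuously differentiable on an interval I with f'' concave on I. Then for all a, b ∈ I with a < b: (1/6)(f(a)+f(b)) + (2/3) f((a+b)/2) ≤ (1/(b-a)) ∫_a^b f(t) dt. -/
/-!
Write `m` for the midpoint, `H = (b - a) / 2` and `g h = f (m + h) + f (m - h)`, so that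
`∫ a..b, f = ∫ 0..H, g` and `g' 0 = 0`. Concavity of `f''` makes the even function
`g'' h = f'' (m + h) + f'' (m - h)` antitone on `[0, H)`. By the mean value theorem
`h g'' h ≤ g' h`, so `2 (g h - g 0) - h g' h`, whose derivative is `g' h - h g'' h`, is
nonnegative; that is, the derivative of `h (g h + 2 g 0) / 3` is at most `g h`. Integrating over
`[0, H]` gives the inequality.
-/

open MeasureTheory intervalIntegral Set

theorem sub_mul_le_sub_of_antitoneOn_deriv {f f' : ℝ → ℝ} {a b : ℝ} (hab : a < b)
    (hf : ContinuousOn f (Icc a b)) (hf' : ∀ x ∈ Ioo a b, HasDerivAt f (f' x) x)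
    (hanti : AntitoneOn f' (Ioc a b)) : (b - a) * f' b ≤ f b - f a := by
  obtain ⟨c, hc, hslope⟩ := exists_hasDerivAt_eq_slope f f' hab hf hf'
  have hle : f' b ≤ f' c := hanti (Ioo_subset_Ioc_self hc) (right_mem_Ioc.2 hab) hc.2.le
  rw [eq_div_iff (sub_pos.2 hab).ne'] at hslope
  nlinarith [sub_pos.2 hab]

theorem ConcaveOn.antitoneOn_add_reflect {u : ℝ → ℝ} {m H : ℝ}
    (hu : ConcaveOn ℝ (Ioo (m - H) (m + H)) u) :
    AntitoneOn (fun h ↦ u (m + h) + u (m - h)) (Ico 0 H) := by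
  intro s hs t ht hst
  obtain rfl | hlt := hst.eq_or_lt
  · rfl
  have ht₀ : 0 < t := hs.1.trans_lt hlt
  have hpt : m + t ∈ Ioo (m - H) (m + H) := ⟨by linarith [ht.1, ht.2], by linarith [ht.2]⟩
  have hmt : m - t ∈ Ioo (m - H) (m + H) := ⟨by linarith [ht.2], by linarith [ht.1, ht.2]⟩
  -- `m ± s` are the convex combinations of `m + t` and `m - t` with weights `(t ± s) / 2t`
  have hα : 0 ≤ (t + s) / (2 * t) := by have := hs.1; positivity
  have hβ : 0 ≤ (t - s) / (2 * t) := div_nonneg (by linarith) (by positivity)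
  have hαβ : (t + s) / (2 * t) + (t - s) / (2 * t) = 1 := by field_simp; ring
  have hs_add : (t + s) / (2 * t) * (m + t) + (t - s) / (2 * t) * (m - t) = m + s := by
    field_simp; ring
  have hs_sub : (t - s) / (2 * t) * (m + t) + (t + s) / (2 * t) * (m - t) = m - s := by
    field_simp; ring
  have hle_add := hu.2 hpt hmt hα hβ hαβ
  have hle_sub := hu.2 hpt hmt hβ hα (by linarith)
  simp only [smul_eq_mul, hs_add, hs_sub] at hle_add hle_sub
  linear_combination hle_add + hle_sub - (u (m + t) + u (m - t)) * hαβ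

theorem mul_deriv_le_two_mul_sub {g g' g'' : ℝ → ℝ} {H : ℝ}
    (hg : ContinuousOn g (Ico 0 H)) (hg' : ContinuousOn g' (Ico 0 H))
    (hdg : ∀ x ∈ Ioo 0 H, HasDerivAt g (g' x) x) (hdg' : ∀ x ∈ Ioo 0 H, HasDerivAt g' (g'' x) x)
    (hanti : AntitoneOn g'' (Ioo 0 H)) (hg'₀ : g' 0 = 0) {x : ℝ} (hx : x ∈ Ico 0 H) :
    x * g' x ≤ 2 * (g x - g 0) := by
  have hmono : MonotoneOn (fun y ↦ 2 * (g y - g 0) - y * g' y) (Ico 0 H) := by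
    refine monotoneOn_of_hasDerivWithinAt_nonneg (convex_Ico 0 H) (by fun_prop)
      (f' := fun y ↦ g' y - y * g'' y) (fun y hy ↦ ?_) (fun y hy ↦ ?_)
    · rw [interior_Ico] at hy
      exact ((((hdg y hy).sub_const (g 0)).const_mul 2).sub
        ((hasDerivAt_id' y).mul (hdg' y hy))).hasDerivWithinAt.congr_deriv (by ring)
    · rw [interior_Ico] at hy
      have := sub_mul_le_sub_of_antitoneOn_deriv hy.1 (hg'.mono (Icc_subset_Ico_right hy.2))
        (fun z hz ↦ hdg' z ⟨hz.1, hz.2.trans hy.2⟩)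
        (hanti.mono (Ioc_subset_Ioo_right hy.2))
      rw [hg'₀] at this
      linarith
  simpa using hmono (left_mem_Ico.2 (hx.1.trans_lt hx.2)) hx hx.1

theorem simpson_half_le_integral {g g' g'' : ℝ → ℝ} {H : ℝ} (hH : 0 ≤ H)
    (hg : ContinuousOn g (Icc 0 H)) (hg' : ContinuousOn g' (Ico 0 H))
    (hdg : ∀ x ∈ Ioo 0 H, HasDerivAt g (g' x) x) (hdg' : ∀ x ∈ Ioo 0 H, HasDerivAt g' (g'' x) x)
    (hanti : AntitoneOn g'' (Ioo 0 H)) (hg'₀ : g' 0 = 0) :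
    H / 3 * (g H + 2 * g 0) ≤ ∫ x in 0..H, g x := by
  have key := sub_le_integral_of_hasDeriv_right_of_le hH
    (g := fun x ↦ x / 3 * (g x + 2 * g 0)) (by fun_prop)
    (fun x hx ↦ (((hasDerivAt_id' x).div_const 3).mul ((hdg x hx).add_const (2 * g 0))
      ).hasDerivWithinAt) (hg.integrableOn_Icc) (fun x hx ↦ ?_)
  · simpa using key
  have := mul_deriv_le_two_mul_sub (hg.mono Ico_subset_Icc_self) hg' hdg hdg' hanti hg'₀
    (Ioo_subset_Ico_self hx)
  linarith

theorem integral_add_reflect {f : ℝ → ℝ} {m H : ℝ}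
    (hf₁ : IntervalIntegrable f volume (m - H) m) (hf₂ : IntervalIntegrable f volume m (m + H)) :
    ∫ h in 0..H, (f (m + h) + f (m - h)) = ∫ x in (m - H)..(m + H), f x := by
  have hi₁ : IntervalIntegrable (fun h ↦ f (m - h)) volume 0 H := by
    simpa using (hf₁.comp_sub_left m).symm
  have hi₂ : IntervalIntegrable (fun h ↦ f (m + h)) volume 0 H := by
    simpa using hf₂.comp_add_left m
  rw [integral_add hi₂ hi₁, integral_comp_add_left, integral_comp_sub_left, add_zero, sub_zero,
    add_comm, integral_add_adjacent_intervals hf₁ hf₂]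

theorem simpson_le_integral_of_concaveOn_deriv2 {f f' f'' : ℝ → ℝ} {a b : ℝ} (hab : a ≤ b)
    (hf : ContinuousOn f (Icc a b)) (hf' : ∀ x ∈ Ioo a b, HasDerivAt f (f' x) x)
    (hf'' : ∀ x ∈ Ioo a b, HasDerivAt f' (f'' x) x) (hconc : ConcaveOn ℝ (Ioo a b) f'') :
    (b - a) / 6 * (f a + 4 * f ((a + b) / 2) + f b) ≤ ∫ x in a..b, f x := by
  set m := (a + b) / 2
  set H := (b - a) / 2 with hH
  have hma : m - H = a := by ring
  have hmb : m + H = b := by ring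
  have hIcc : ∀ h ∈ Icc 0 H, m + h ∈ Icc a b ∧ m - h ∈ Icc a b := fun h hh ↦
    ⟨⟨by linarith [hh.1], by linarith [hh.2]⟩, ⟨by linarith [hh.2], by linarith [hh.1]⟩⟩
  have hderiv : ∀ {u u' : ℝ → ℝ}, (∀ x ∈ Ioo a b, HasDerivAt u (u' x) x) → ∀ h ∈ Ico 0 H,
      HasDerivAt (fun h ↦ u (m + h)) (u' (m + h)) h ∧
        HasDerivAt (fun h ↦ u (m - h)) (-u' (m - h)) h := fun hu h hh ↦
    ⟨(hu _ ⟨by linarith [hh.1, hh.2], by linarith [hh.2]⟩).comp_const_add m h,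
      (hu _ ⟨by linarith [hh.2], by linarith [hh.1, hh.2]⟩).comp_const_sub m h⟩
  have hg : ContinuousOn (fun h ↦ f (m + h) + f (m - h)) (Icc 0 H) :=
    (hf.comp (by fun_prop) fun h hh ↦ (hIcc h hh).1).add
      (hf.comp (by fun_prop) fun h hh ↦ (hIcc h hh).2)
  have hdg' : ∀ h ∈ Ico 0 H, HasDerivAt (fun h ↦ f' (m + h) - f' (m - h))
      (f'' (m + h) + f'' (m - h)) h := fun h hh ↦
    ((hderiv hf'' h hh).1.sub (hderiv hf'' h hh).2).congr_deriv (sub_neg_eq_add _ _)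
  have hanti : AntitoneOn (fun h ↦ f'' (m + h) + f'' (m - h)) (Ioo 0 H) := by
    rw [← hma, ← hmb] at hconc
    exact hconc.antitoneOn_add_reflect.mono Ioo_subset_Ico_self
  have key := simpson_half_le_integral (by linarith) hg
    (fun h hh ↦ (hdg' h hh).continuousAt.continuousWithinAt)
    (fun h hh ↦ ((hderiv hf' h (Ioo_subset_Ico_self hh)).1.add
      (hderiv hf' h (Ioo_subset_Ico_self hh)).2).congr_deriv (sub_eq_add_neg _ _).symm)
    (fun h hh ↦ hdg' h (Ioo_subset_Ico_self hh)) hanti (by simp)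
  have hint₁ : IntervalIntegrable f volume a m :=
    (hf.mono (Icc_subset_Icc_right (by linarith))).intervalIntegrable_of_Icc (by linarith)
  have hint₂ : IntervalIntegrable f volume m b :=
    (hf.mono (Icc_subset_Icc_left (by linarith))).intervalIntegrable_of_Icc (by linarith)
  rw [integral_add_reflect (by rwa [hma]) (by rwa [hmb]), hma, hmb, add_zero, sub_zero] at key
  convert key using 1
  rw [hH]
  ring

/-- **Theorem 3, second part.** If `f ∈ C⁴(I)` and `f''` is concave on the interval `I`,
then for `a, b ∈ I` with `a < b`,
`(1/6)(f a + f b) + (2/3) f((a+b)/2) ≤ (1/(b-a)) ∫_a^b f`. -/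
theorem stmt_6 (f : ℝ → ℝ) (I : Set ℝ) (hI : Convex ℝ I)
    (hf : ContDiffOn ℝ 4 f I) (hconc'' : ConcaveOn ℝ I (deriv (deriv f)))
    (a b : ℝ) (ha : a ∈ I) (hb : b ∈ I) (hab : a < b) :
    (1 / 6) * (f a + f b) + (2 / 3) * f ((a + b) / 2) ≤
      (1 / (b - a)) * ∫ t in a..b, f t := by
  have hIcc : Icc a b ⊆ I := hI.ordConnected.out ha hb
  have hC : ∀ x ∈ Ioo a b, ContDiffAt ℝ 4 f x := fun x hx ↦
    hf.contDiffAt (mem_interior_iff_mem_nhds.1 (interior_mono hIcc (by rwa [interior_Icc])))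
  have key := simpson_le_integral_of_concaveOn_deriv2 hab.le (hf.continuousOn.mono hIcc)
    (fun x hx ↦ ((hC x hx).differentiableAt (by norm_num)).hasDerivAt)
    (fun x hx ↦ (((hC x hx).derivWithin (m := 1) (by norm_num)).differentiableAt
      (by norm_num)).hasDerivAt)
    (hconc''.subset (Ioo_subset_Icc_self.trans hIcc) (convex_Ioo a b))
  rw [mul_comm (1 / (b - a)), ← div_eq_mul_one_div, le_div_iff₀ (sub_pos.2 hab)]
  linarith
end

section
/- Let f : ℝ → ℝ be four times continuously differentiable on an interval I, with f convex and f'' concave on I. Then for all a, b ∈ I with a < b: (1/6)(f(a)+f(b)) + (2/3) f((a+b)/2) ≤ (1/(b-a)) ∫_a^b f(t) dt ≤ (1/4)(f(a)+f(b)) + (1/2) f((a+b)/2). -/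
/-!
The upper bound is the composite trapezoidal rule on the two halves of `[a, b]`, which
overestimates the integral of a convex function. The lower bound says that Simpson's rule
underestimates `∫ f` when `f''` is concave. With `m` the midpoint, the Simpson defect
`E x = 3 ∫_{m-x}^{m+x} f - x (f (m-x) + 4 f m + f (m+x))` vanishes at `0`, and so does its
derivative `φ x = 2 (f (m+x) + f (m-x) - 2 f m) - x (f' (m+x) - f' (m-x))`. Finally
`φ' x = f' (m+x) - f' (m-x) - x (f'' (m+x) + f'' (m-x)) ≥ 0` is the trapezoid inequality for the
concave `f''` on `[m-x, m+x]`, so `φ ≥ 0` and `E ≥ 0`. Derivatives are only taken on the open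
interval `(a, b)`: at an endpoint of `I`, `deriv` need not be the one-sided derivative.
-/

open MeasureTheory intervalIntegral Set

theorem integral_sub_mul_add_sub_mul (a b u v : ℝ) :
    ∫ t in a..b, ((b - t) * u + (t - a) * v) = (b - a) ^ 2 * (u + v) / 2 := by
  rw [intervalIntegral.integral_add (by apply Continuous.intervalIntegrable; fun_prop)
    (by apply Continuous.intervalIntegrable; fun_prop), intervalIntegral.integral_mul_const,
    intervalIntegral.integral_mul_const, integral_comp_sub_left (fun x => x),
    integral_comp_sub_right (fun x => x)]
  simp only [sub_self, integral_id]
  ring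

theorem ConvexOn.integral_le_trapezoid_s7 {g : ℝ → ℝ} {a b : ℝ} (hab : a ≤ b)
    (hg : ConvexOn ℝ (Icc a b) g) (hcont : ContinuousOn g (Icc a b)) :
    ∫ t in a..b, g t ≤ (b - a) * (g a + g b) / 2 := by
  rcases hab.eq_or_lt with rfl | hlt
  · simp
  have hsecant : ∀ t ∈ Ioo a b, (b - a) * g t ≤ (b - t) * g a + (t - a) * g b := fun t ht =>
    hg.secant_mono_aux1 (left_mem_Icc.2 hab) (right_mem_Icc.2 hab) ht.1 ht.2
  have : (b - a) * ∫ t in a..b, g t ≤ (b - a) * ((b - a) * (g a + g b) / 2) := by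
    rw [← intervalIntegral.integral_const_mul, ← mul_div_assoc, ← mul_assoc, ← sq,
      ← integral_sub_mul_add_sub_mul]
    refine integral_mono_on_of_le_Ioo hab ((hcont.intervalIntegrable_of_Icc hab).const_mul _)
      (by apply Continuous.intervalIntegrable; fun_prop) hsecant
  exact le_of_mul_le_mul_left this (sub_pos.2 hlt)

theorem ConcaveOn.trapezoid_le_integral {g : ℝ → ℝ} {a b : ℝ} (hab : a ≤ b)
    (hg : ConcaveOn ℝ (Icc a b) g) (hcont : ContinuousOn g (Icc a b)) :
    (b - a) * (g a + g b) / 2 ≤ ∫ t in a..b, g t := by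
  have := hg.neg.integral_le_trapezoid_s7 hab hcont.neg
  simp only [Pi.neg_apply, intervalIntegral.integral_neg] at this
  linarith

theorem HasDerivAt.comp_add_add_comp_sub {h : ℝ → ℝ} {m x d₁ d₂ : ℝ}
    (h₁ : HasDerivAt h d₁ (m + x)) (h₂ : HasDerivAt h d₂ (m - x)) :
    HasDerivAt (fun y => h (m + y) + h (m - y)) (d₁ - d₂) x :=
  ((h₁.comp_const_add m x).add (h₂.comp_const_sub m x)).congr_deriv (by ring)

theorem HasDerivAt.comp_add_sub_comp_sub {h : ℝ → ℝ} {m x d₁ d₂ : ℝ}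
    (h₁ : HasDerivAt h d₁ (m + x)) (h₂ : HasDerivAt h d₂ (m - x)) :
    HasDerivAt (fun y => h (m + y) - h (m - y)) (d₁ + d₂) x :=
  ((h₁.comp_const_add m x).sub (h₂.comp_const_sub m x)).congr_deriv (by ring)

theorem ConcaveOn.trapezoid_le_sub_of_hasDerivAt {h h' : ℝ → ℝ} {a b : ℝ} (hab : a ≤ b)
    (hderiv : ∀ x ∈ Icc a b, HasDerivAt h (h' x) x) (hconc : ConcaveOn ℝ (Icc a b) h')
    (hcont : ContinuousOn h' (Icc a b)) :
    (b - a) * (h' a + h' b) / 2 ≤ h b - h a := by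
  rw [← integral_eq_sub_of_hasDerivAt (fun x hx => hderiv x (uIcc_of_le hab ▸ hx))
    (hcont.intervalIntegrable_of_Icc hab)]
  exact hconc.trapezoid_le_integral hab hcont

theorem ContDiffOn.hasDerivAt_deriv {f : ℝ → ℝ} {s : Set ℝ} {n : WithTop ℕ∞}
    (hf : ContDiffOn ℝ n f s) (hs : IsOpen s) (hn : n ≠ 0) {x : ℝ} (hx : x ∈ s) :
    HasDerivAt f (deriv f x) x :=
  ((hf.differentiableOn hn).differentiableAt (hs.mem_nhds hx)).hasDerivAt

theorem ContinuousOn.continuousOn_primitive_Icc {f : ℝ → ℝ} {a b : ℝ} (hab : a ≤ b)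
    (hf : ContinuousOn f (Icc a b)) : ContinuousOn (fun y => ∫ t in a..y, f t) (Icc a b) := by
  have hint : IntegrableOn f (uIcc a b) := by
    rw [uIcc_of_le hab]; exact hf.integrableOn_Icc
  simpa only [uIcc_of_le hab] using continuousOn_primitive_interval hint

theorem ContinuousOn.hasDerivAt_primitive {f : ℝ → ℝ} {a b y : ℝ}
    (hf : ContinuousOn f (Icc a b)) (hy : y ∈ Ioo a b) :
    HasDerivAt (fun u => ∫ t in a..u, f t) (f y) y :=
  integral_hasDerivAt_right
    ((hf.mono (Icc_subset_Icc le_rfl hy.2.le)).intervalIntegrable_of_Icc hy.1.le)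
    ((hf.mono Ioo_subset_Icc_self).stronglyMeasurableAtFilter isOpen_Ioo y hy)
    ((hf.mono Ioo_subset_Icc_self).continuousAt (isOpen_Ioo.mem_nhds hy))

section Symmetric

variable {f : ℝ → ℝ} {m r : ℝ}

theorem add_mem_Ioo_and_sub_mem_Ioo {x : ℝ} (hx : x ∈ Ico 0 r) :
    m + x ∈ Ioo (m - r) (m + r) ∧ m - x ∈ Ioo (m - r) (m + r) := by
  obtain ⟨h0, h1⟩ := hx
  exact ⟨⟨by linarith, by linarith⟩, ⟨by linarith, by linarith⟩⟩

theorem mul_sub_deriv_le_of_concaveOn_deriv_deriv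
    (hf : ContDiffOn ℝ 2 f (Ioo (m - r) (m + r)))
    (hconc : ConcaveOn ℝ (Ioo (m - r) (m + r)) (deriv (deriv f))) {x : ℝ} (hx : x ∈ Ico 0 r) :
    x * (deriv f (m + x) - deriv f (m - x)) ≤ 2 * (f (m + x) + f (m - x) - 2 * f m) := by
  set U := Ioo (m - r) (m + r)
  have hf₁ : ContDiffOn ℝ 1 (deriv f) U := hf.deriv_of_isOpen isOpen_Ioo (by norm_num)
  have hd₀ : ∀ y ∈ U, HasDerivAt f (deriv f y) y := fun y hy =>
    hf.hasDerivAt_deriv isOpen_Ioo two_ne_zero hy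
  have hd₁ : ∀ y ∈ U, HasDerivAt (deriv f) (deriv (deriv f) y) y := fun y hy =>
    hf₁.hasDerivAt_deriv isOpen_Ioo one_ne_zero hy
  set φ : ℝ → ℝ := fun y =>
    2 * (f (m + y) + f (m - y) - 2 * f m) - y * (deriv f (m + y) - deriv f (m - y))
  set φ' : ℝ → ℝ := fun y =>
    deriv f (m + y) - deriv f (m - y) - y * (deriv (deriv f) (m + y) + deriv (deriv f) (m - y))
  have hφ : ∀ y ∈ Ico 0 r, HasDerivAt φ (φ' y) y := by
    intro y hy
    obtain ⟨hp, hm⟩ := add_mem_Ioo_and_sub_mem_Ioo hy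
    have hsum := (((hd₀ _ hp).comp_add_add_comp_sub (hd₀ _ hm)).sub_const (2 * f m)).const_mul 2
    have hprod := (hasDerivAt_id y).mul ((hd₁ _ hp).comp_add_sub_comp_sub (hd₁ _ hm))
    exact (hsum.sub hprod).congr_deriv (by simp only [φ', id, one_mul]; ring)
  have hφ'_nonneg : ∀ y ∈ Ico 0 r, 0 ≤ φ' y := by
    intro y hy
    obtain ⟨hp, hm⟩ := add_mem_Ioo_and_sub_mem_Ioo hy
    have hsub : Icc (m - y) (m + y) ⊆ U := ordConnected_Ioo.out hm hp
    have := ConcaveOn.trapezoid_le_sub_of_hasDerivAt (by linarith [hy.1])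
      (fun z hz => hd₁ z (hsub hz)) (hconc.subset hsub (convex_Icc _ _))
      ((hf₁.continuousOn_deriv_of_isOpen isOpen_Ioo le_rfl).mono hsub)
    simp only [φ']
    linarith
  have hmono : MonotoneOn φ (Ico 0 r) :=
    monotoneOn_of_hasDerivWithinAt_nonneg (convex_Ico 0 r)
      (fun y hy => (hφ y hy).continuousAt.continuousWithinAt)
      (fun y hy => (hφ y (interior_subset hy)).hasDerivWithinAt)
      (fun y hy => hφ'_nonneg y (interior_subset hy))
  have := hmono ⟨le_rfl, hx.1.trans_lt hx.2⟩ hx hx.1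
  simp only [φ, add_zero, sub_zero, zero_mul] at this
  linarith

theorem simpson_le_integral_symm (hr : 0 ≤ r) (hcont : ContinuousOn f (Icc (m - r) (m + r)))
    (hf : ContDiffOn ℝ 2 f (Ioo (m - r) (m + r)))
    (hconc : ConcaveOn ℝ (Ioo (m - r) (m + r)) (deriv (deriv f))) :
    r * (f (m - r) + 4 * f m + f (m + r)) ≤ 3 * ∫ t in (m - r)..(m + r), f t := by
  have hmaps : ∀ y ∈ Icc 0 r, m + y ∈ Icc (m - r) (m + r) ∧ m - y ∈ Icc (m - r) (m + r) :=
    fun y ⟨h0, h1⟩ => ⟨⟨by linarith, by linarith⟩, ⟨by linarith, by linarith⟩⟩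
  set P : ℝ → ℝ := fun y => ∫ t in (m - r)..y, f t
  have hP : ContinuousOn P (Icc (m - r) (m + r)) :=
    hcont.continuousOn_primitive_Icc (by linarith)
  set E : ℝ → ℝ := fun y =>
    3 * (P (m + y) - P (m - y)) - y * (f (m + y) + f (m - y) + 4 * f m)
  have hE : ContinuousOn E (Icc 0 r) := by
    have hP_add : ContinuousOn (fun y => P (m + y)) (Icc 0 r) :=
      hP.comp (by fun_prop) fun y hy => (hmaps y hy).1
    have hP_sub : ContinuousOn (fun y => P (m - y)) (Icc 0 r) :=
      hP.comp (by fun_prop) fun y hy => (hmaps y hy).2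
    have hf_add : ContinuousOn (fun y => f (m + y)) (Icc 0 r) :=
      hcont.comp (by fun_prop) fun y hy => (hmaps y hy).1
    have hf_sub : ContinuousOn (fun y => f (m - y)) (Icc 0 r) :=
      hcont.comp (by fun_prop) fun y hy => (hmaps y hy).2
    exact (continuousOn_const.mul (hP_add.sub hP_sub)).sub
      (continuousOn_id.mul ((hf_add.add hf_sub).add continuousOn_const))
  have hdE : ∀ y ∈ interior (Icc 0 r), HasDerivAt E
      (2 * (f (m + y) + f (m - y) - 2 * f m) - y * (deriv f (m + y) - deriv f (m - y))) y := by
    intro y hy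
    rw [interior_Icc] at hy
    obtain ⟨hp, hm⟩ := add_mem_Ioo_and_sub_mem_Ioo (m := m) (Ioo_subset_Ico_self hy)
    have hint :=
      ((hcont.hasDerivAt_primitive hp).comp_add_sub_comp_sub (hcont.hasDerivAt_primitive hm))
    have hsum := (hf.hasDerivAt_deriv isOpen_Ioo two_ne_zero hp).comp_add_add_comp_sub
      (hf.hasDerivAt_deriv isOpen_Ioo two_ne_zero hm)
    have hprod := (hasDerivAt_id y).mul (hsum.add_const (4 * f m))
    exact ((hint.const_mul 3).sub hprod).congr_deriv (by simp only [id, one_mul]; ring)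
  have hmono : MonotoneOn E (Icc 0 r) :=
    monotoneOn_of_hasDerivWithinAt_nonneg (convex_Icc 0 r) hE
      (fun y hy => (hdE y hy).hasDerivWithinAt) fun y hy => by
        rw [interior_Icc] at hy
        linarith [mul_sub_deriv_le_of_concaveOn_deriv_deriv hf hconc (Ioo_subset_Ico_self hy)]
  have := hmono (left_mem_Icc.2 hr) (right_mem_Icc.2 hr) hr
  simp only [E, P, add_zero, sub_zero, integral_same, zero_mul] at this
  linarith

end Symmetric

theorem simpson_le_integral {f : ℝ → ℝ} {a b : ℝ} (hab : a ≤ b)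
    (hcont : ContinuousOn f (Icc a b)) (hf : ContDiffOn ℝ 2 f (Ioo a b))
    (hconc : ConcaveOn ℝ (Ioo a b) (deriv (deriv f))) :
    (b - a) / 6 * (f a + 4 * f ((a + b) / 2) + f b) ≤ ∫ t in a..b, f t := by
  have hl : (a + b) / 2 - (b - a) / 2 = a := by ring
  have hr : (a + b) / 2 + (b - a) / 2 = b := by ring
  have := simpson_le_integral_symm (m := (a + b) / 2) (r := (b - a) / 2) (by linarith)
    (by rwa [hl, hr]) (by rwa [hl, hr]) (by rwa [hl, hr])
  rw [hl, hr] at this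
  linarith

theorem ConvexOn.integral_le_composite_trapezoid {g : ℝ → ℝ} {a b : ℝ} (hab : a ≤ b)
    (hg : ConvexOn ℝ (Icc a b) g) (hcont : ContinuousOn g (Icc a b)) :
    ∫ t in a..b, g t ≤ (b - a) / 4 * (g a + 2 * g ((a + b) / 2) + g b) := by
  set m := (a + b) / 2 with hm_def
  have ham : a ≤ m := by linarith [hm_def]
  have hmb : m ≤ b := by linarith [hm_def]
  have hleft : Icc a m ⊆ Icc a b := Icc_subset_Icc le_rfl hmb
  have hright : Icc m b ⊆ Icc a b := Icc_subset_Icc ham le_rfl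
  rw [← integral_add_adjacent_intervals (b := m)
    ((hcont.mono hleft).intervalIntegrable_of_Icc ham)
    ((hcont.mono hright).intervalIntegrable_of_Icc hmb)]
  have h₁ := (hg.subset hleft (convex_Icc a m)).integral_le_trapezoid_s7 ham (hcont.mono hleft)
  have h₂ := (hg.subset hright (convex_Icc m b)).integral_le_trapezoid_s7 hmb (hcont.mono hright)
  rw [show m - a = (b - a) / 2 by ring] at h₁
  rw [show b - m = (b - a) / 2 by ring] at h₂
  linarith

/-- **Corollary 1.** If `f ∈ C⁴(I)`, `f` is convex and `f''` is concave on the interval `I`,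
then for `a, b ∈ I` with `a < b`,
`N(1/6,2/3) ≤ (1/(b-a)) ∫_a^b f ≤ N(1/4,1/2)`. -/
theorem stmt_7 (f : ℝ → ℝ) (I : Set ℝ) (hI : Convex ℝ I)
    (hf : ContDiffOn ℝ 4 f I) (hconv : ConvexOn ℝ I f)
    (hconc'' : ConcaveOn ℝ I (deriv (deriv f)))
    (a b : ℝ) (ha : a ∈ I) (hb : b ∈ I) (hab : a < b) :
    (1 / 6) * (f a + f b) + (2 / 3) * f ((a + b) / 2) ≤
      (1 / (b - a)) * ∫ t in a..b, f t ∧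
    (1 / (b - a)) * ∫ t in a..b, f t ≤
      (1 / 4) * (f a + f b) + (1 / 2) * f ((a + b) / 2) := by
  have hIcc : Icc a b ⊆ I := hI.ordConnected.out ha hb
  have hIoo : Ioo a b ⊆ I := Ioo_subset_Icc_self.trans hIcc
  have hcont : ContinuousOn f (Icc a b) := hf.continuousOn.mono hIcc
  have hlower := simpson_le_integral hab.le hcont ((hf.mono hIoo).of_le (by norm_num))
    (hconc''.subset hIoo (convex_Ioo a b))
  have hupper := (hconv.subset hIcc (convex_Icc a b)).integral_le_composite_trapezoid hab.le hcont
  have hba : 0 < b - a := sub_pos.2 hab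
  rw [one_div (b - a), le_inv_mul_iff₀ hba, inv_mul_le_iff₀ hba]
  constructor <;> linarith
end

section
/- Let f : ℝ → ℝ be four times continuously differentiable on an interval I with f'' convex on I. Then for all a, b ∈ I with a < b: 0 ≤ (1/6)(f(a)+f(b)) + (2/3) f((a+b)/2) − (1/(b-a)) ∫_a^b f(t) dt ≤ ((b-a)^2/324) [ f''(a) + f''(b) − 2 f''((a+b)/2) ]. -/
/-!
Write `m = (a + b) / 2`, `h = b - a` and `F k` for the `k`-th derivative of `f` on `[a, b]`.
Four integrations by parts against the Peano kernel of Simpson's rule give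
`simpsonError f a b = ∫ t in a..b, simpsonKernel h (min (t - a) (b - t)) * F 4 t`, and two
against the tent `min (t - a) (b - t)` give `∫ t in a..b, min (t - a) (b - t) * F 4 t =
F 2 a + F 2 b - 2 * F 2 m`. The kernel satisfies `0 ≤ simpsonKernel h X ≤ h ^ 2 / 324 * X` for
`0 ≤ X ≤ h / 2`, and `F 4 ≥ 0` because `F 2 = f''` is convex, so both bounds follow. At the
endpoints `f''` may differ from the one-sided `F 2`, but convexity forces `F 2 ≤ f''` there.
-/

open MeasureTheory intervalIntegral Set

/-- Derivatives are only asked for inside the interval, so that `f ∈ C⁴(I)` gives such a chain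
on `[a, b]` even when `a` or `b` is an endpoint of `I`. -/
def IsDerivChainOn (F : ℕ → ℝ → ℝ) (n : ℕ) (a b : ℝ) : Prop :=
  (∀ k ≤ n, ContinuousOn (F k) (uIcc a b)) ∧
    ∀ k < n, ∀ x ∈ Ioo (min a b) (max a b), HasDerivAt (F k) (F (k + 1) x) x

namespace IsDerivChainOn

variable {F U : ℕ → ℝ → ℝ} {n k : ℕ} {a b c d : ℝ}

theorem mono (hF : IsDerivChainOn F n a b) (h : uIcc c d ⊆ uIcc a b) :
    IsDerivChainOn F n c d := by
  obtain ⟨hmin, hmax⟩ := uIcc_subset_uIcc_iff_le'.1 h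
  exact ⟨fun k hk => (hF.1 k hk).mono h, fun k hk x hx =>
    hF.2 k hk x ⟨hmin.trans_lt hx.1, hx.2.trans_le hmax⟩⟩

theorem of_hasDerivAt (hF : ∀ k < n, ∀ x, HasDerivAt (F k) (F (k + 1) x) x)
    (hn : Continuous (F n)) : IsDerivChainOn F n a b := by
  refine ⟨fun k hk => ?_, fun k hk x _ => hF k hk x⟩
  rcases hk.lt_or_eq with hk | rfl
  · exact HasDerivAt.continuousOn fun x _ => hF k hk x
  · exact hn.continuousOn

theorem continuousOn_Icc (hF : IsDerivChainOn F n a b) (hab : a ≤ b) (hk : k ≤ n) :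
    ContinuousOn (F k) (Icc a b) :=
  uIcc_of_le hab ▸ hF.1 k hk

theorem hasDerivAt (hF : IsDerivChainOn F n a b) (hab : a ≤ b) (hk : k < n) {x : ℝ}
    (hx : x ∈ Ioo a b) : HasDerivAt (F k) (F (k + 1) x) x :=
  hF.2 k hk x (by rwa [min_eq_left hab, max_eq_right hab])

theorem deriv_deriv_eq (hF : IsDerivChainOn F n a b) (hab : a ≤ b) (hn : 2 ≤ n) {x : ℝ}
    (hx : x ∈ Ioo a b) : deriv (deriv (F 0)) x = F 2 x := by
  have hderiv : deriv (F 0) =ᶠ[nhds x] F 1 := by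
    filter_upwards [isOpen_Ioo.mem_nhds hx] with y hy
    exact (hF.hasDerivAt hab (by omega) hy).deriv
  rw [hderiv.deriv_eq]
  exact (hF.hasDerivAt hab (by omega) hx).deriv

theorem nonneg_of_convexOn (hF : IsDerivChainOn F n a b) (hab : a < b) (hk : k + 2 ≤ n)
    (hconv : ConvexOn ℝ (Ioo a b) (F k)) : ∀ x ∈ Icc a b, 0 ≤ F (k + 2) x := by
  have hd : ∀ j < n, ∀ x ∈ Ioo a b, HasDerivAt (F j) (F (j + 1) x) x :=
    fun j hj x hx => hF.hasDerivAt hab.le hj hx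
  have hmono : MonotoneOn (F (k + 1)) (Ioo a b) :=
    (hconv.monotoneOn_deriv fun x hx => (hd k (by omega) x hx).differentiableAt).congr
      fun x hx => (hd k (by omega) x hx).deriv
  have hpos : ∀ x ∈ Ioo a b, 0 ≤ F (k + 2) x := fun x hx => by
    rw [← ((hd (k + 1) (by omega) x hx).hasDerivWithinAt).derivWithin
      (isOpen_Ioo.uniqueDiffWithinAt hx)]
    exact hmono.derivWithin_nonneg
  intro x hx
  exact ContinuousWithinAt.closure_le (by rwa [closure_Ioo hab.ne]) continuousWithinAt_const
    ((hF.continuousOn_Icc hab.le hk x hx).mono Ioo_subset_Icc_self) hpos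

theorem integral_mul_fourth_eq (hU : IsDerivChainOn U 4 a b) (hF : IsDerivChainOn F 4 a b) :
    ∫ t in a..b, U 0 t * F 4 t =
      (U 0 b * F 3 b - U 1 b * F 2 b + U 2 b * F 1 b - U 3 b * F 0 b) -
        (U 0 a * F 3 a - U 1 a * F 2 a + U 2 a * F 1 a - U 3 a * F 0 a) +
        ∫ t in a..b, U 4 t * F 0 t := by
  have hint (k l : ℕ) (hk : k ≤ 4) (hl : l ≤ 4) :
      IntervalIntegrable (fun t => U k t * F l t) volume a b :=
    ((hU.1 k hk).mul (hF.1 l hl)).intervalIntegrable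
  have hint₀₄ := hint 0 4 (by norm_num) (by norm_num)
  have hint₄₀ := hint 4 0 (by norm_num) (by norm_num)
  have hFTC : ∫ t in a..b, (U 0 t * F 4 t - U 4 t * F 0 t) =
      (U 0 b * F 3 b - U 1 b * F 2 b + U 2 b * F 1 b - U 3 b * F 0 b) -
        (U 0 a * F 3 a - U 1 a * F 2 a + U 2 a * F 1 a - U 3 a * F 0 a) := by
    have hUc := hU.1
    have hFc := hF.1
    have hcont : ContinuousOn
        (fun t => U 0 t * F 3 t - U 1 t * F 2 t + U 2 t * F 1 t - U 3 t * F 0 t) (uIcc a b) := by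
      fun_prop (disch := norm_num)
    refine integral_eq_sub_of_hasDeriv_right hcont (fun x hx => ?_) (hint₀₄.sub hint₄₀)
    have hU' (k : ℕ) (hk : k < 4) := hU.2 k hk x hx
    have hF' (k : ℕ) (hk : k < 4) := hF.2 k hk x hx
    refine (((((hU' 0 (by norm_num)).mul (hF' 3 (by norm_num))).sub
      ((hU' 1 (by norm_num)).mul (hF' 2 (by norm_num)))).add
      ((hU' 2 (by norm_num)).mul (hF' 1 (by norm_num)))).sub
      ((hU' 3 (by norm_num)).mul (hF' 0 (by norm_num)))).hasDerivWithinAt.congr_deriv ?_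
    simp only [Nat.reduceAdd]
    ring
  rw [integral_sub hint₀₄ hint₄₀] at hFTC
  linarith

end IsDerivChainOn

theorem ContDiffOn.isDerivChainOn_iteratedDerivWithin {f : ℝ → ℝ} {n : ℕ} {a b : ℝ}
    (hf : ContDiffOn ℝ n f (Icc a b)) (hab : a < b) :
    IsDerivChainOn (fun k => iteratedDerivWithin k f (Icc a b)) n a b := by
  have hu : UniqueDiffOn ℝ (Icc a b) := uniqueDiffOn_Icc hab
  rw [IsDerivChainOn, uIcc_of_le hab.le, min_eq_left hab.le, max_eq_right hab.le]
  refine ⟨fun k hk => hf.continuousOn_iteratedDerivWithin (mod_cast hk) hu, fun k hk x hx => ?_⟩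
  have hd := (hf.differentiableOn_iteratedDerivWithin (mod_cast hk) hu x
    (Ioo_subset_Icc_self hx)).hasDerivWithinAt.hasDerivAt (Icc_mem_nhds hx.1 hx.2)
  rwa [iteratedDerivWithin_succ]

theorem ContinuousOn.le_of_convexOn_of_eqOn_Ioo {φ g : ℝ → ℝ} {a b : ℝ} (hab : a < b)
    (hφ : ContinuousOn φ (Icc a b)) (hg : ConvexOn ℝ (Icc a b) g) (heq : EqOn φ g (Ioo a b)) :
    φ a ≤ g a ∧ φ b ≤ g b := by
  have hba : 0 < b - a := sub_pos.2 hab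
  have hchord : ∀ x ∈ Icc a b, φ x ≤ g a + (x - a) / (b - a) * (g b - g a) := by
    intro x hx
    refine ContinuousWithinAt.closure_le (by rwa [closure_Ioo hab.ne])
      ((hφ x hx).mono Ioo_subset_Icc_self)
      (by fun_prop : Continuous fun x => g a + (x - a) / (b - a) * (g b - g a)).continuousWithinAt
      fun y hy => ?_
    have hs : 0 ≤ (y - a) / (b - a) := div_nonneg (by linarith [hy.1]) hba.le
    have hs' : 0 ≤ 1 - (y - a) / (b - a) := by
      rw [sub_nonneg, div_le_one hba]; linarith [hy.2]
    have hy' : (1 - (y - a) / (b - a)) • a + ((y - a) / (b - a)) • b = y := by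
      simp only [smul_eq_mul]; field_simp; ring
    have := hg.2 (left_mem_Icc.2 hab.le) (right_mem_Icc.2 hab.le) hs' hs (sub_add_cancel _ _)
    rw [hy', smul_eq_mul, smul_eq_mul] at this
    rw [heq hy]
    linarith
  constructor
  · simpa using hchord a (left_mem_Icc.2 hab.le)
  · simpa [hba.ne'] using hchord b (right_mem_Icc.2 hab.le)

theorem integral_comp_min_sub_mul {g F : ℝ → ℝ} {a b : ℝ} (hab : a ≤ b) (hg : Continuous g)
    (hF : ContinuousOn F (uIcc a b)) :
    ∫ t in a..b, g (min (t - a) (b - t)) * F t =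
      (∫ t in a..(a + b) / 2, g (t - a) * F t) - ∫ t in b..(a + b) / 2, g (b - t) * F t := by
  have hm : (a + b) / 2 ∈ uIcc a b := by rw [uIcc_of_le hab]; constructor <;> linarith
  have hint : ∀ c ∈ uIcc a b,
      IntervalIntegrable (fun t => g (min (t - a) (b - t)) * F t) volume a c :=
    fun c hc => ((by fun_prop : Continuous fun t => g (min (t - a) (b - t))).continuousOn.mul
      (hF.mono (uIcc_subset_uIcc left_mem_uIcc hc))).intervalIntegrable
  rw [← integral_add_adjacent_intervals (hint _ hm)
    ((hint _ hm).symm.trans (hint _ right_mem_uIcc)),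
    intervalIntegral.integral_symm ((a + b) / 2) b, sub_neg_eq_add]
  congr 1
  · refine integral_congr fun t ht => ?_
    rw [uIcc_of_le (by linarith)] at ht
    simp only [min_eq_left (by linarith [ht.2] : t - a ≤ b - t)]
  · refine integral_congr fun t ht => ?_
    rw [uIcc_of_le (by linarith)] at ht
    simp only [min_eq_right (by linarith [ht.1] : b - t ≤ t - a)]

/-- The Peano kernel of Simpson's rule on an interval of length `h`, as a function of the
distance `X` from `t` to the nearer endpoint. -/
noncomputable def simpsonKernel (h X : ℝ) : ℝ := X ^ 3 / 36 - X ^ 4 / (24 * h)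

theorem continuous_simpsonKernel (h : ℝ) : Continuous (simpsonKernel h) := by
  unfold simpsonKernel
  fun_prop

theorem simpsonKernel_neg_neg (h X : ℝ) : simpsonKernel (-h) (-X) = -simpsonKernel h X := by
  simp only [simpsonKernel]
  ring

theorem simpsonKernel_nonneg {h X : ℝ} (hh : 0 < h) (hX : 0 ≤ X) (hXh : X ≤ h / 2) :
    0 ≤ simpsonKernel h X := by
  have hfactor : simpsonKernel h X = X ^ 3 * (2 * h - 3 * X) / (72 * h) := by
    simp only [simpsonKernel]; field_simp; ring
  have : 0 ≤ 2 * h - 3 * X := by linarith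
  rw [hfactor]
  positivity

theorem simpsonKernel_le {h X : ℝ} (hh : 0 < h) (hX : 0 ≤ X) :
    simpsonKernel h X ≤ h ^ 2 / 324 * X := by
  have hgap : h ^ 2 / 324 * X - simpsonKernel h X =
      X * ((9 * X - 4 * h) ^ 2 * (9 * X + 2 * h) + 22 * h ^ 3) / (17496 * h) := by
    simp only [simpsonKernel]; field_simp; ring
  have : 0 ≤ X * ((9 * X - 4 * h) ^ 2 * (9 * X + 2 * h) + 22 * h ^ 3) / (17496 * h) := by
    positivity
  linarith

noncomputable def simpsonKernelChain (h c : ℝ) : ℕ → ℝ → ℝ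
  | 0 => fun t => simpsonKernel h (t - c)
  | 1 => fun t => (t - c) ^ 2 / 12 - (t - c) ^ 3 / (6 * h)
  | 2 => fun t => (t - c) / 6 - (t - c) ^ 2 / (2 * h)
  | 3 => fun t => 1 / 6 - (t - c) / h
  | _ => fun _ => -1 / h

theorem isDerivChainOn_simpsonKernelChain {h : ℝ} (hh : h ≠ 0) (c a b : ℝ) :
    IsDerivChainOn (simpsonKernelChain h c) 4 a b := by
  refine IsDerivChainOn.of_hasDerivAt (fun k hk x => ?_) continuous_const
  have hX : HasDerivAt (fun t => t - c) 1 x := (hasDerivAt_id x).sub_const c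
  interval_cases k
  · refine (((hX.pow 3).div_const 36).sub ((hX.pow 4).div_const (24 * h))).congr_deriv ?_
    simp only [simpsonKernelChain]; field_simp; ring
  · refine (((hX.pow 2).div_const 12).sub ((hX.pow 3).div_const (6 * h))).congr_deriv ?_
    simp only [simpsonKernelChain]; field_simp; ring
  · refine ((hX.div_const 6).sub ((hX.pow 2).div_const (2 * h))).congr_deriv ?_
    simp only [simpsonKernelChain]; field_simp; ring
  · refine ((hX.div_const h).const_sub (1 / 6)).congr_deriv ?_
    simp only [simpsonKernelChain]; ring

def linearChain (c : ℝ) : ℕ → ℝ → ℝ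
  | 0 => fun t => t - c
  | 1 => fun _ => 1
  | _ => fun _ => 0

theorem isDerivChainOn_linearChain (c a b : ℝ) (n : ℕ) :
    IsDerivChainOn (linearChain c) n a b := by
  refine IsDerivChainOn.of_hasDerivAt (fun k _ x => ?_) ?_
  · match k with
    | 0 => exact (hasDerivAt_id x).sub_const c
    | 1 => exact hasDerivAt_const x (1 : ℝ)
    | _ + 2 => exact hasDerivAt_const x (0 : ℝ)
  · match n with
    | 0 => exact continuous_id.sub continuous_const
    | 1 => exact continuous_const
    | _ + 2 => exact continuous_const

noncomputable def simpsonError (f : ℝ → ℝ) (a b : ℝ) : ℝ :=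
  1 / 6 * (f a + f b) + 2 / 3 * f ((a + b) / 2) - 1 / (b - a) * ∫ t in a..b, f t

namespace IsDerivChainOn

variable {F : ℕ → ℝ → ℝ} {a b c h : ℝ}

theorem integral_simpsonKernel_mul (hF : IsDerivChainOn F 4 c (c + h / 2)) (hh : h ≠ 0) :
    ∫ t in c..c + h / 2, simpsonKernel h (t - c) * F 4 t =
      h ^ 3 / 1152 * F 3 (c + h / 2) - h / 24 * F 1 (c + h / 2) + F 0 (c + h / 2) / 3 +
        F 0 c / 6 - (∫ t in c..c + h / 2, F 0 t) / h := by
  have := (isDerivChainOn_simpsonKernelChain hh c c (c + h / 2)).integral_mul_fourth_eq hF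
  simp only [simpsonKernelChain] at this
  rw [this, intervalIntegral.integral_const_mul]
  simp only [simpsonKernel]
  field_simp
  ring

theorem integral_sub_mul (hF : IsDerivChainOn F 4 a b) :
    ∫ t in a..b, (t - a) * F 4 t = (b - a) * F 3 b - F 2 b + F 2 a := by
  have := (isDerivChainOn_linearChain a a b 4).integral_mul_fourth_eq hF
  simp only [linearChain] at this
  rw [this]
  simp

theorem simpsonError_eq (hF : IsDerivChainOn F 4 a b) (hab : a < b) :
    simpsonError (F 0) a b =
      ∫ t in a..b, simpsonKernel (b - a) (min (t - a) (b - t)) * F 4 t := by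
  have hm : (a + b) / 2 ∈ uIcc a b := by rw [uIcc_of_le hab.le]; constructor <;> linarith
  have hma : a + (b - a) / 2 = (a + b) / 2 := by ring
  have hmb : b + (a - b) / 2 = (a + b) / 2 := by ring
  have hleft := (hF.mono (by rw [hma]; exact uIcc_subset_uIcc left_mem_uIcc hm)
    ).integral_simpsonKernel_mul (sub_ne_zero.2 hab.ne')
  -- the right half is the same identity, read from `b` with the negative length `a - b`
  have hright := (hF.mono (by rw [hmb]; exact uIcc_subset_uIcc right_mem_uIcc hm)
    ).integral_simpsonKernel_mul (sub_ne_zero.2 hab.ne)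
  rw [hma] at hleft
  rw [hmb] at hright
  have hreflect : ∫ t in b..(a + b) / 2, simpsonKernel (b - a) (b - t) * F 4 t =
      -∫ t in b..(a + b) / 2, simpsonKernel (a - b) (t - b) * F 4 t := by
    rw [← intervalIntegral.integral_neg]
    refine integral_congr fun t _ => ?_
    rw [← neg_mul, ← simpsonKernel_neg_neg, neg_sub, neg_sub]
  have hsplit : ∫ t in a..b, F 0 t =
      (∫ t in a..(a + b) / 2, F 0 t) - ∫ t in b..(a + b) / 2, F 0 t := by
    simpa using integral_comp_min_sub_mul (g := fun _ => 1) hab.le continuous_const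
      (hF.1 0 (by norm_num))
  rw [integral_comp_min_sub_mul hab.le (continuous_simpsonKernel _) (hF.1 4 le_rfl), hreflect,
    hleft, hright, simpsonError, hsplit]
  field_simp [sub_ne_zero.2 hab.ne, sub_ne_zero.2 hab.ne']
  ring

theorem integral_min_mul (hF : IsDerivChainOn F 4 a b) (hab : a ≤ b) :
    ∫ t in a..b, min (t - a) (b - t) * F 4 t = F 2 a + F 2 b - 2 * F 2 ((a + b) / 2) := by
  have hm : (a + b) / 2 ∈ uIcc a b := by rw [uIcc_of_le hab]; constructor <;> linarith
  have hleft := (hF.mono (uIcc_subset_uIcc left_mem_uIcc hm)).integral_sub_mul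
  have hright := (hF.mono (uIcc_subset_uIcc right_mem_uIcc hm)).integral_sub_mul
  have hreflect : ∫ t in b..(a + b) / 2, (b - t) * F 4 t =
      -∫ t in b..(a + b) / 2, (t - b) * F 4 t := by
    rw [← intervalIntegral.integral_neg]
    exact integral_congr fun t _ => by ring
  have hsplit := integral_comp_min_sub_mul (g := id) hab continuous_id (hF.1 4 le_rfl)
  simp only [id] at hsplit
  rw [hsplit, hreflect, hleft, hright]
  ring

theorem simpsonError_nonneg (hF : IsDerivChainOn F 4 a b) (hab : a < b)
    (hF4 : ∀ x ∈ Icc a b, 0 ≤ F 4 x) : 0 ≤ simpsonError (F 0) a b := by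
  rw [hF.simpsonError_eq hab]
  refine integral_nonneg hab.le fun t ht =>
    mul_nonneg (simpsonKernel_nonneg (by linarith) ?_ ?_) (hF4 t ht)
  · exact le_min (by linarith [ht.1]) (by linarith [ht.2])
  · linarith [min_le_left (t - a) (b - t), min_le_right (t - a) (b - t)]

theorem simpsonError_le (hF : IsDerivChainOn F 4 a b) (hab : a < b)
    (hF4 : ∀ x ∈ Icc a b, 0 ≤ F 4 x) :
    simpsonError (F 0) a b ≤ (b - a) ^ 2 / 324 * (F 2 a + F 2 b - 2 * F 2 ((a + b) / 2)) := by
  have hcont : ContinuousOn (F 4) (uIcc a b) := hF.1 4 le_rfl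
  have htent : Continuous fun t => min (t - a) (b - t) := by fun_prop
  rw [hF.simpsonError_eq hab, ← hF.integral_min_mul hab.le, ← intervalIntegral.integral_const_mul]
  refine integral_mono_on hab.le
    (((continuous_simpsonKernel _).comp htent).continuousOn.mul hcont).intervalIntegrable
    (continuousOn_const.mul (htent.continuousOn.mul hcont)).intervalIntegrable fun t ht => ?_
  calc simpsonKernel (b - a) (min (t - a) (b - t)) * F 4 t
      ≤ (b - a) ^ 2 / 324 * min (t - a) (b - t) * F 4 t :=
        mul_le_mul_of_nonneg_right (simpsonKernel_le (by linarith)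
          (le_min (by linarith [ht.1]) (by linarith [ht.2]))) (hF4 t ht)
    _ = (b - a) ^ 2 / 324 * (min (t - a) (b - t) * F 4 t) := mul_assoc _ _ _

end IsDerivChainOn

/-- **Theorem 4, first part.** If `f ∈ C⁴(I)` and `f''` is convex on the interval `I`,
then for `a, b ∈ I` with `a < b`,
`0 ≤ N(1/6,2/3) - (1/(b-a)) ∫_a^b f ≤ ((b-a)²/324)[f''(a) + f''(b) - 2 f''((a+b)/2)]`. -/
theorem stmt_8 (f : ℝ → ℝ) (I : Set ℝ) (hI : Convex ℝ I)
    (hf : ContDiffOn ℝ 4 f I) (hconv'' : ConvexOn ℝ I (deriv (deriv f)))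
    (a b : ℝ) (ha : a ∈ I) (hb : b ∈ I) (hab : a < b) :
    0 ≤ (1 / 6) * (f a + f b) + (2 / 3) * f ((a + b) / 2)
        - (1 / (b - a)) * ∫ t in a..b, f t ∧
    (1 / 6) * (f a + f b) + (2 / 3) * f ((a + b) / 2)
        - (1 / (b - a)) * ∫ t in a..b, f t ≤
      (b - a) ^ 2 / 324 *
        (deriv (deriv f) a + deriv (deriv f) b - 2 * deriv (deriv f) ((a + b) / 2)) := by
  have hsub : Icc a b ⊆ I := hI.ordConnected.out ha hb
  set F : ℕ → ℝ → ℝ := fun k => iteratedDerivWithin k f (Icc a b)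
  have hF : IsDerivChainOn F 4 a b := (hf.mono hsub).isDerivChainOn_iteratedDerivWithin hab
  have hF0 : F 0 = f := iteratedDerivWithin_zero
  have hF2 : EqOn (F 2) (deriv (deriv f)) (Ioo a b) := fun x hx => by
    rw [← hF0, hF.deriv_deriv_eq hab.le (by norm_num) hx]
  have hconv : ConvexOn ℝ (Icc a b) (deriv (deriv f)) := hconv''.subset hsub (convex_Icc a b)
  have hF4 := hF.nonneg_of_convexOn hab le_rfl
    ((hconv.subset Ioo_subset_Icc_self (convex_Ioo a b)).congr hF2.symm)
  obtain ⟨hFa, hFb⟩ :=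
    (hF.continuousOn_Icc hab.le (by norm_num)).le_of_convexOn_of_eqOn_Ioo hab hconv hF2
  have hFm : F 2 ((a + b) / 2) = deriv (deriv f) ((a + b) / 2) := hF2 ⟨by linarith, by linarith⟩
  have hlower := hF.simpsonError_nonneg hab hF4
  have hupper := hF.simpsonError_le hab hF4
  rw [hF0] at hlower hupper
  rw [hFm] at hupper
  refine ⟨hlower, hupper.trans ?_⟩
  gcongr
end

section
/- For all real numbers a, b with 0 < a < b, the logarithmic mean L = (b−a)/(log b − log a), arithmetic mean A = (a+b)/2 and geometric mean G = √(ab) satisfy (1/3)(A + 2G) − (2/81)((A − G)/L)^2 (A + G) ≤ L ≤ (1/3)(A + 2G). -/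
/-!
Put `g = √(ab)` and `u = (log b - log a)/2 > 0`, so that `a = g e^{-u}` and `b = g e^{u}`.
Then `A = g cosh u`, `G = g` and `L = g sinh u / u`, and after clearing denominators (using
`sinh² u = (cosh u - 1)(cosh u + 1)` for the lower bound) the two inequalities become
`3 sinh u ≤ u cosh u + 2u ≤ (2/27) u³ (cosh u - 1) + 3 sinh u` for `u ≥ 0`.
Both are proved by differentiating: each difference vanishes at `0`, and its derivative is
nonnegative by an inequality of the same kind lower in the chain.
-/

open Real Set

lemma nonneg_of_hasDerivAt_of_nonneg {F F' : ℝ → ℝ} (hF : ∀ x, HasDerivAt F (F' x) x)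
    (hF0 : F 0 = 0) (hF' : ∀ x, 0 < x → 0 ≤ F' x) {u : ℝ} (hu : 0 ≤ u) : 0 ≤ F u := by
  have hmono : MonotoneOn F (Ici 0) :=
    monotoneOn_of_hasDerivWithinAt_nonneg (convex_Ici 0)
      (fun x _ => (hF x).continuousAt.continuousWithinAt) (fun x _ => (hF x).hasDerivWithinAt)
      (fun x hx => hF' x (by simpa using hx))
  simpa [hF0] using hmono self_mem_Ici hu hu

namespace Real

variable {a b g u : ℝ}

lemma sinh_le_mul_cosh (hu : 0 ≤ u) : sinh u ≤ u * cosh u := by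
  have key : 0 ≤ u * cosh u - sinh u :=
    nonneg_of_hasDerivAt_of_nonneg (F := fun x => x * cosh x - sinh x)
      (F' := fun x => x * sinh x)
      (fun x => (((hasDerivAt_id' x).mul (hasDerivAt_cosh x)).sub
        (hasDerivAt_sinh x)).congr_deriv (by ring))
      (by simp) (fun x hx => mul_nonneg hx.le (sinh_nonneg_iff.2 hx.le)) hu
  linarith

lemma two_mul_cosh_sub_one_le_mul_sinh (hu : 0 ≤ u) : 2 * (cosh u - 1) ≤ u * sinh u := by
  have key : 0 ≤ u * sinh u - 2 * cosh u + 2 :=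
    nonneg_of_hasDerivAt_of_nonneg (F := fun x => x * sinh x - 2 * cosh x + 2)
      (F' := fun x => x * cosh x - sinh x)
      (fun x => ((((hasDerivAt_id' x).mul (hasDerivAt_sinh x)).sub
        ((hasDerivAt_cosh x).const_mul 2)).add_const 2).congr_deriv (by ring))
      (by simp) (fun x hx => by linarith [sinh_le_mul_cosh hx.le]) hu
  linarith

lemma three_mul_sinh_le (hu : 0 ≤ u) : 3 * sinh u ≤ u * cosh u + 2 * u := by
  have key : 0 ≤ u * cosh u + 2 * u - 3 * sinh u :=
    nonneg_of_hasDerivAt_of_nonneg (F := fun x => x * cosh x + 2 * x - 3 * sinh x)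
      (F' := fun x => x * sinh x - 2 * cosh x + 2)
      (fun x => ((((hasDerivAt_id' x).mul (hasDerivAt_cosh x)).add
        ((hasDerivAt_id' x).const_mul 2)).sub ((hasDerivAt_sinh x).const_mul 3)).congr_deriv
          (by ring))
      (by simp) (fun x hx => by linarith [two_mul_cosh_sub_one_le_mul_sinh hx.le]) hu
  linarith

lemma mul_cosh_le_mul_sinh (hu : 0 ≤ u) : 9 * u * cosh u ≤ (9 + 4 * u ^ 2) * sinh u := by
  have key : 0 ≤ (9 + 4 * u ^ 2) * sinh u - 9 * u * cosh u :=
    nonneg_of_hasDerivAt_of_nonneg (F := fun x => (9 + 4 * x ^ 2) * sinh x - 9 * x * cosh x)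
      (F' := fun x => 4 * x ^ 2 * cosh x - x * sinh x)
      (fun x => (((((hasDerivAt_pow 2 x).const_mul 4).const_add 9).mul (hasDerivAt_sinh x)).sub
        (((hasDerivAt_id' x).const_mul 9).mul (hasDerivAt_cosh x))).congr_deriv (by ring))
      (by simp) (fun x hx => by
        nlinarith [mul_le_mul_of_nonneg_left (sinh_le_mul_cosh hx.le) hx.le,
          mul_nonneg (sq_nonneg x) (cosh_pos x).le])
      hu
  linarith

lemma mul_sinh_add_two_le (hu : 0 ≤ u) :
    u * sinh u + 2 ≤ 2 / 9 * u ^ 2 * (cosh u - 1) + 2 / 27 * u ^ 3 * sinh u + 2 * cosh u := by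
  have key : 0 ≤ 2 / 9 * u ^ 2 * (cosh u - 1) + 2 / 27 * u ^ 3 * sinh u
      + 2 * cosh u - u * sinh u - 2 :=
    nonneg_of_hasDerivAt_of_nonneg
      (F := fun x => 2 / 9 * x ^ 2 * (cosh x - 1) + 2 / 27 * x ^ 3 * sinh x
        + 2 * cosh x - x * sinh x - 2)
      (F' := fun x => 4 / 9 * x * (cosh x - 1) + 4 / 9 * x ^ 2 * sinh x
        + 2 / 27 * x ^ 3 * cosh x + sinh x - x * cosh x)
      (fun x => (((((((hasDerivAt_pow 2 x).const_mul (2 / 9)).mul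
        ((hasDerivAt_cosh x).sub_const 1)).add (((hasDerivAt_pow 3 x).const_mul (2 / 27)).mul
          (hasDerivAt_sinh x))).add ((hasDerivAt_cosh x).const_mul 2)).sub
            ((hasDerivAt_id' x).mul (hasDerivAt_sinh x))).sub_const 2).congr_deriv (by ring))
      (by simp) (fun x hx => by
        have hc : 0 ≤ cosh x - 1 := by linarith [one_le_cosh x]
        nlinarith [mul_cosh_le_mul_sinh hx.le, mul_nonneg hx.le hc,
          mul_nonneg (pow_nonneg hx.le 3) (cosh_pos x).le])
      hu
  linarith

lemma mul_cosh_add_le (hu : 0 ≤ u) :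
    u * cosh u + 2 * u ≤ 2 / 27 * u ^ 3 * (cosh u - 1) + 3 * sinh u := by
  have key : 0 ≤ 2 / 27 * u ^ 3 * (cosh u - 1) + 3 * sinh u - u * cosh u - 2 * u :=
    nonneg_of_hasDerivAt_of_nonneg
      (F := fun x => 2 / 27 * x ^ 3 * (cosh x - 1) + 3 * sinh x - x * cosh x - 2 * x)
      (F' := fun x => 2 / 9 * x ^ 2 * (cosh x - 1) + 2 / 27 * x ^ 3 * sinh x
        + 2 * cosh x - x * sinh x - 2)
      (fun x => ((((((hasDerivAt_pow 3 x).const_mul (2 / 27)).mul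
        ((hasDerivAt_cosh x).sub_const 1)).add ((hasDerivAt_sinh x).const_mul 3)).sub
          ((hasDerivAt_id' x).mul (hasDerivAt_cosh x))).sub
            ((hasDerivAt_id' x).const_mul 2)).congr_deriv (by ring))
      (by simp) (fun x hx => by linarith [mul_sinh_add_two_le hx.le]) hu
  linarith

lemma mul_sinh_div_le (hg : 0 ≤ g) (hu : 0 < u) :
    g * sinh u / u ≤ 1 / 3 * (g * cosh u + 2 * g) := by
  rw [div_le_iff₀ hu]
  nlinarith [mul_le_mul_of_nonneg_left (three_mul_sinh_le hu.le) hg]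

lemma le_mul_sinh_div (hg : 0 < g) (hu : 0 < u) :
    1 / 3 * (g * cosh u + 2 * g)
        - 2 / 81 * ((g * cosh u - g) / (g * sinh u / u)) ^ 2 * (g * cosh u + g)
      ≤ g * sinh u / u := by
  have hs : sinh u ≠ 0 := (sinh_pos_iff.2 hu).ne'
  have hcorr : ((g * cosh u - g) / (g * sinh u / u)) ^ 2 * (g * cosh u + g)
      = u ^ 2 * g * (cosh u - 1) := by
    field_simp
    rw [sinh_sq]
    ring
  rw [mul_assoc (2 / 81 : ℝ), hcorr, le_div_iff₀ hu]
  nlinarith [mul_le_mul_of_nonneg_left (mul_cosh_add_le hu.le) hg.le]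

lemma sqrt_mul_mul_exp_half_log_sub (ha : 0 < a) (hb : 0 < b) :
    √(a * b) * exp ((log b - log a) / 2) = b := by
  rw [← exp_log (sqrt_pos.2 (mul_pos ha hb)), ← exp_add, log_sqrt (mul_pos ha hb).le,
    log_mul ha.ne' hb.ne', show (log a + log b) / 2 + (log b - log a) / 2 = log b by ring,
    exp_log hb]

lemma sqrt_mul_mul_exp_neg_half_log_sub (ha : 0 < a) (hb : 0 < b) :
    √(a * b) * exp (-((log b - log a) / 2)) = a := by
  rw [mul_comm a, ← neg_div, neg_sub, sqrt_mul_mul_exp_half_log_sub hb ha]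

lemma sqrt_mul_mul_cosh_half_log_sub (ha : 0 < a) (hb : 0 < b) :
    √(a * b) * cosh ((log b - log a) / 2) = (a + b) / 2 := by
  have hb' := sqrt_mul_mul_exp_half_log_sub ha hb
  have ha' := sqrt_mul_mul_exp_neg_half_log_sub ha hb
  rw [cosh_eq]
  linear_combination (ha' + hb') / 2

lemma sqrt_mul_mul_sinh_half_log_sub (ha : 0 < a) (hb : 0 < b) :
    √(a * b) * sinh ((log b - log a) / 2) = (b - a) / 2 := by
  have hb' := sqrt_mul_mul_exp_half_log_sub ha hb
  have ha' := sqrt_mul_mul_exp_neg_half_log_sub ha hb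
  rw [sinh_eq]
  linear_combination (hb' - ha') / 2

end Real

/-- **Theorem 5, first part.** For `0 < a < b`, with `A = (a+b)/2`, `G = √(ab)` and
`L = (b-a)/(log b - log a)`, one has
`(1/3)(A + 2G) - (2/81)((A-G)/L)² (A+G) ≤ L ≤ (1/3)(A + 2G)`. -/
theorem stmt_11 (a b A G L : ℝ) (ha : 0 < a) (hab : a < b)
    (hA : A = (a + b) / 2) (hG : G = Real.sqrt (a * b))
    (hL : L = (b - a) / (Real.log b - Real.log a)) :
    (1 / 3) * (A + 2 * G) - (2 / 81) * ((A - G) / L) ^ 2 * (A + G) ≤ L ∧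
    L ≤ (1 / 3) * (A + 2 * G) := by
  have hb : 0 < b := ha.trans hab
  set u := (log b - log a) / 2 with hu_def
  have hu : 0 < u := half_pos (sub_pos.2 (log_lt_log ha hab))
  have hA' : A = G * cosh u := by rw [hA, hG, sqrt_mul_mul_cosh_half_log_sub ha hb]
  have hL' : L = G * sinh u / u := by
    rw [hL, hG, sqrt_mul_mul_sinh_half_log_sub ha hb, hu_def]
    field_simp
  have hG_pos : 0 < G := hG ▸ sqrt_pos.2 (mul_pos ha hb)
  rw [hA', hL']
  exact ⟨le_mul_sinh_div hG_pos hu, mul_sinh_div_le hG_pos.le hu⟩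
end

section
/- For all real numbers a, b with 0 < a < b, the harmonic mean H = 2/(1/a + 1/b), arithmetic mean A = (a+b)/2 and logarithmic mean L = (b−a)/(log b − log a) satisfy (A − H)/(6 A^2) ≤ (1/2)(1/A + 1/H) − 1/L ≤ (A(A − H)/(6 H^2)) · (4/H − 3/A). -/
/-!
Put `x = b / a`. Then `(1/2)(1/A + 1/H) - 1/L`, `(A - H)/(6A²)` and the right-hand bound are
`logApprox x - log x`, `(x-1)³/(3(x+1)³)` and `(x-1)³(x³+1)/(48x³)`, each divided by `a(x-1)`.
So the theorem amounts to two-sided bounds on `logApprox x - log x` for `x ≥ 1`; both differences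
vanish at `x = 1` and have derivatives of the form `(x-1)⁴ · (positive)`, hence are nonnegative.
-/

open Real Set

theorem monotoneOn_Ici_of_hasDerivAt_nonneg {f f' : ℝ → ℝ} {a : ℝ}
    (hf : ∀ x, a ≤ x → HasDerivAt f (f' x) x) (hf' : ∀ x, a < x → 0 ≤ f' x) :
    MonotoneOn f (Ici a) := by
  refine monotoneOn_of_hasDerivWithinAt_nonneg (f' := f') (convex_Ici a)
    (fun x hx ↦ (hf x hx).continuousAt.continuousWithinAt) (fun x hx ↦ ?_) (fun x hx ↦ ?_)
  all_goals rw [interior_Ici] at hx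
  · exact (hf x hx.le).hasDerivWithinAt
  · exact hf' x hx

/-- `(b - a) · (1/2)(1/A + 1/H)` for `a = 1`, `b = x`. -/
noncomputable def logApprox (x : ℝ) : ℝ := (x - 1) / (x + 1) + (x ^ 2 - 1) / (4 * x)

theorem hasDerivAt_logApprox_sub_log {x : ℝ} (hx : 0 < x) :
    HasDerivAt (fun x ↦ logApprox x - log x)
      (2 / (x + 1) ^ 2 + (x ^ 2 + 1) / (4 * x ^ 2) - 1 / x) x := by
  have h := ((((hasDerivAt_id' x).sub_const 1).div ((hasDerivAt_id' x).add_const 1)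
    (by positivity)).add (((hasDerivAt_pow 2 x).sub_const 1).div
    ((hasDerivAt_id' x).const_mul 4) (by positivity))).sub (hasDerivAt_log hx.ne')
  exact h.congr_deriv (by field_simp; ring)

theorem cube_div_le_logApprox_sub_log {x : ℝ} (hx : 1 ≤ x) :
    (x - 1) ^ 3 / (3 * (x + 1) ^ 3) ≤ logApprox x - log x := by
  have hmono : MonotoneOn
      (fun x ↦ logApprox x - log x - (x - 1) ^ 3 / (3 * (x + 1) ^ 3)) (Ici 1) := by
    refine monotoneOn_Ici_of_hasDerivAt_nonneg
      (f' := fun x ↦ (x - 1) ^ 4 * (x ^ 2 + 4 * x + 1) / (4 * x ^ 2 * (x + 1) ^ 4))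
      (fun x hx ↦ ?_) (fun x _ ↦ by positivity)
    have hx0 : 0 < x := by linarith
    exact ((hasDerivAt_logApprox_sub_log hx0).sub
      ((((hasDerivAt_id' x).sub_const 1).fun_pow 3).div
        ((((hasDerivAt_id' x).add_const 1).fun_pow 3).const_mul 3) (by positivity))).congr_deriv
      (by field_simp; ring)
  simpa [logApprox] using hmono self_mem_Ici hx hx

theorem logApprox_sub_log_le {x : ℝ} (hx : 1 ≤ x) :
    logApprox x - log x ≤ (x - 1) ^ 3 * (x ^ 3 + 1) / (48 * x ^ 3) := by
  have hmono : MonotoneOn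
      (fun x ↦ (x - 1) ^ 3 * (x ^ 3 + 1) / (48 * x ^ 3) - (logApprox x - log x)) (Ici 1) := by
    refine monotoneOn_Ici_of_hasDerivAt_nonneg
      (f' := fun x ↦ (x - 1) ^ 4 * (x ^ 4 + 4 * x ^ 3 + 4 * x ^ 2 + 4 * x + 1) /
        (16 * x ^ 4 * (x + 1) ^ 2))
      (fun x hx ↦ ?_) (fun x _ ↦ by positivity)
    have hx0 : 0 < x := by linarith
    exact ((((((hasDerivAt_id' x).sub_const 1).fun_pow 3).fun_mul
      ((hasDerivAt_pow 3 x).add_const 1)).div ((hasDerivAt_pow 3 x).const_mul 48)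
        (by positivity)).sub (hasDerivAt_logApprox_sub_log hx0)).congr_deriv
      (by field_simp; ring)
  simpa [logApprox] using hmono self_mem_Ici hx hx

/-- **Theorem 5, second part.** For `0 < a < b`, with `A = (a+b)/2`,
`H = 2/(1/a + 1/b)` and `L = (b-a)/(log b - log a)`, one has
`(A-H)/(6A²) ≤ (1/2)(1/A + 1/H) - 1/L ≤ (A(A-H)/(6H²))(4/H - 3/A)`. -/
theorem stmt_12 (a b A H L : ℝ) (ha : 0 < a) (hab : a < b)
    (hA : A = (a + b) / 2) (hH : H = 2 / (1 / a + 1 / b))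
    (hL : L = (b - a) / (Real.log b - Real.log a)) :
    (A - H) / (6 * A ^ 2) ≤ (1 / 2) * (1 / A + 1 / H) - 1 / L ∧
    (1 / 2) * (1 / A + 1 / H) - 1 / L ≤
      A * (A - H) / (6 * H ^ 2) * (4 / H - 3 / A) := by
  obtain ⟨x, hx, rfl⟩ : ∃ x, 1 < x ∧ b = a * x :=
    ⟨b / a, (one_lt_div ha).2 hab, by field_simp⟩
  subst hA hH hL
  have hx1 : 0 < x - 1 := by linarith
  rw [log_mul ha.ne' (by positivity), add_sub_cancel_left]
  have hmid : 1 / 2 * (1 / ((a + a * x) / 2) + 1 / (2 / (1 / a + 1 / (a * x)))) -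
      1 / ((a * x - a) / log x) = (logApprox x - log x) / (a * (x - 1)) := by
    unfold logApprox; field_simp; ring
  have hlow : ((a + a * x) / 2 - 2 / (1 / a + 1 / (a * x))) / (6 * ((a + a * x) / 2) ^ 2) =
      (x - 1) ^ 3 / (3 * (x + 1) ^ 3) / (a * (x - 1)) := by
    field_simp; ring
  have hupp : (a + a * x) / 2 * ((a + a * x) / 2 - 2 / (1 / a + 1 / (a * x))) /
      (6 * (2 / (1 / a + 1 / (a * x))) ^ 2) *
      (4 / (2 / (1 / a + 1 / (a * x))) - 3 / ((a + a * x) / 2)) =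
      (x - 1) ^ 3 * (x ^ 3 + 1) / (48 * x ^ 3) / (a * (x - 1)) := by
    field_simp; ring
  rw [hmid, hlow, hupp]
  exact ⟨by gcongr; exact cube_div_le_logApprox_sub_log hx.le,
    by gcongr; exact logApprox_sub_log_le hx.le⟩
end

section
/- For every fixed γ ∈ (0, 1/2], the convex function f(t) = t^{1/γ} on [0,1] satisfies γ(f(0) + f(1)) + (1 − 2γ) f(1/2) > ∫_0^1 f(t) dt. Consequently, the lower bound M(γ, 1−2γ) = γ(f(a)+f(b)) + (1−2γ) f((a+b)/2) in the refined Hermite–Hadamard inequality fails for some convex function whenever γ > 0, so the left-hand side of the Hermite–Hadamard inequality cannot be improved in this form in general. -/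
open MeasureTheory intervalIntegral

/-!
With `p = 1/γ ≥ 2`, the integral `∫₀¹ t^p = 1/(p+1) = γ/(1+γ)` is strictly smaller than `γ`,
whereas the left-hand side is `γ` plus the nonnegative midpoint term `(1-2γ) 2^(-p)`.
-/

theorem integral_rpow_zero_one {p : ℝ} (hp : -1 < p) :
    ∫ t in (0:ℝ)..1, t ^ p = 1 / (p + 1) := by
  rw [integral_rpow (Or.inl hp), Real.one_rpow, Real.zero_rpow (by linarith), sub_zero]

theorem integral_rpow_one_div_zero_one {γ : ℝ} (hγ : 0 < γ) :
    ∫ t in (0:ℝ)..1, t ^ (1 / γ) = γ / (1 + γ) := by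
  rw [integral_rpow_zero_one (by have := one_div_pos.2 hγ; linarith)]
  field_simp

/-- **The lower Hermite–Hadamard bound cannot be improved.** For every fixed
`γ ∈ (0, 1/2]`, the function `f t = t^(1/γ)` is convex on `[0,1]` and satisfies
`γ (f 0 + f 1) + (1 - 2γ) f (1/2) > ∫_0^1 f`, so the improved lower bound
`M(γ, 1-2γ) ≤ (1/(b-a)) ∫_a^b f` fails for some convex `f` whenever `γ > 0`. -/
theorem stmt_16 (γ : ℝ) (hγ : γ ∈ Set.Ioc 0 (1 / 2)) :
    ConvexOn ℝ (Set.Icc 0 1) (fun t : ℝ => t ^ (1 / γ)) ∧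
    γ * ((0:ℝ) ^ (1 / γ) + (1:ℝ) ^ (1 / γ)) +
        (1 - 2 * γ) * ((1 / 2 : ℝ) ^ (1 / γ)) >
      ∫ t in (0:ℝ)..1, t ^ (1 / γ) := by
  obtain ⟨hγ0, hγ2⟩ := hγ
  have hp : 1 ≤ 1 / γ := by rw [le_div_iff₀ hγ0]; linarith
  refine ⟨(convexOn_rpow hp).subset Set.Icc_subset_Ici_self (convex_Icc 0 1), ?_⟩
  have hmid : 0 ≤ (1 - 2 * γ) * ((1 / 2 : ℝ) ^ (1 / γ)) :=
    mul_nonneg (by linarith) (by positivity)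
  have hint : γ / (1 + γ) < γ := div_lt_self hγ0 (by linarith)
  rw [integral_rpow_one_div_zero_one hγ0, Real.zero_rpow (by positivity), Real.one_rpow]
  linarith
end

section
/- Let I be an open interval, f : ℝ → ℝ infinitely differentiable on I with f''(t) > 0 for all t ∈ I, and a ∈ I. Define, for b ∈ I with b ≠ a, F_f(a,b) = ( (1/(b-a)) ∫_a^b f(t) dt − f((a+b)/2) ) / ( f(a) + f(b) − 2 f((a+b)/2) ). Then the limit of F_f(a,b) as b → a equals 1/6. -/
open MeasureTheory intervalIntegral Filter Asymptotics Set

lemma peano2 {f : ℝ → ℝ} {a c : ℝ} {s : Set ℝ} (hs : IsOpen s) (ha : a ∈ s)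
    (hfd : ∀ x ∈ s, HasDerivAt f (deriv f x) x)
    (hc : HasDerivAt (deriv f) c a) :
    (fun x => f x - f a - deriv f a * (x - a) - c / 2 * (x - a) ^ 2)
      =o[nhds a] fun x => (x - a) ^ 2 := by
  set E : ℝ → ℝ := fun x => f x - f a - deriv f a * (x - a) - c / 2 * (x - a) ^ 2 with hE
  set E' : ℝ → ℝ := fun x => deriv f x - deriv f a - c * (x - a) with hE'
  have hEd : ∀ y ∈ s, HasDerivAt E (E' y) y := by
    intro y hy
    have h1 := ((hfd y hy).sub_const (f a)).sub
      (((hasDerivAt_id y).sub_const a).const_mul (deriv f a))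
    have h2 := h1.sub ((((hasDerivAt_id y).sub_const a).pow 2).const_mul (c / 2))
    have h3 : E' y = deriv f y - deriv f a * 1 - c / 2 * (↑2 * (id y - a) ^ (2 - 1) * 1) := by
      simp only [hE', id_eq]; ring
    rw [h3]; exact h2
  have h1 : (fun x => deriv f x - deriv f a - (x - a) • c) =o[nhds a] fun x => x - a :=
    hasDerivAt_iff_isLittleO.1 hc
  rw [isLittleO_iff]
  intro ε hε
  have h2 := isLittleO_iff.1 h1 hε
  have h3 : ∀ᶠ x in nhds a, x ∈ s ∧ ‖E' x‖ ≤ ε * ‖x - a‖ := by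
    filter_upwards [hs.mem_nhds ha, h2] with x hx h2x
    exact ⟨hx, by simpa [hE', smul_eq_mul, mul_comm] using h2x⟩
  obtain ⟨δ, hδpos, hδ⟩ := Metric.eventually_nhds_iff_ball.1 h3
  filter_upwards [Metric.ball_mem_nhds a hδpos] with x hx
  have hseg : segment ℝ a x ⊆ Metric.ball a δ :=
    (convex_ball a δ).segment_subset (Metric.mem_ball_self hδpos) hx
  have hseg2 : segment ℝ a x ⊆ Metric.closedBall a ‖x - a‖ :=
    (convex_closedBall a ‖x - a‖).segment_subset (by simp)
      (by simp [Metric.mem_closedBall, dist_eq_norm])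
  have key := Convex.norm_image_sub_le_of_norm_hasDerivWithin_le
    (f := E) (f' := E') (s := segment ℝ a x) (C := ε * ‖x - a‖)
    (fun y hy => (hEd y (hδ y (hseg hy)).1).hasDerivWithinAt)
    (fun y hy => by
      refine le_trans (hδ y (hseg hy)).2 ?_
      have : ‖y - a‖ ≤ ‖x - a‖ := by
        simpa [dist_eq_norm] using Metric.mem_closedBall.1 (hseg2 hy)
      exact mul_le_mul_of_nonneg_left this hε.le)
    (convex_segment a x) (left_mem_segment ℝ a x) (right_mem_segment ℝ a x)
  have hEa : E a = 0 := by simp [hE]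
  rw [hEa, sub_zero] at key
  calc ‖E x‖ ≤ ε * ‖x - a‖ * ‖x - a‖ := key
    _ = ε * ‖(x - a) ^ 2‖ := by rw [norm_pow]; ring

/-- **Limit of `F_f(a,b)` as `b → a`.** If `I` is an open interval, `f ∈ C^∞(I)` with
`f'' > 0` on `I`, and `a ∈ I`, then
`F_f(a,b) = ((1/(b-a)) ∫_a^b f - f((a+b)/2)) / (f a + f b - 2 f((a+b)/2)) → 1/6`
as `b → a` with `b ∈ I`, `b ≠ a`. -/
theorem stmt_17 (I : Set ℝ) (hIopen : IsOpen I) (hIconv : Convex ℝ I)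
    (f : ℝ → ℝ) (hf : ContDiffOn ℝ (⊤ : ℕ∞) f I)
    (hf'' : ∀ t ∈ I, 0 < deriv (deriv f) t) (a : ℝ) (ha : a ∈ I) :
    Tendsto (fun b : ℝ =>
        ((1 / (b - a)) * (∫ t in a..b, f t) - f ((a + b) / 2)) /
          (f a + f b - 2 * f ((a + b) / 2)))
      (nhdsWithin a (I \ {a})) (nhds (1 / 6)) := by
  set L := nhdsWithin a (I \ {a}) with hL
  set c := deriv (deriv f) a with hcdef
  have hc : 0 < c := hf'' a ha
  set d1 := deriv f a with hd1def
  -- differentiability facts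
  have hfd : ∀ x ∈ I, HasDerivAt f (deriv f x) x := fun x hx =>
    (((hf.differentiableOn (by simp)) x hx).differentiableAt (hIopen.mem_nhds hx)).hasDerivAt
  have hf1 : ContDiffOn ℝ (⊤ : ℕ∞) (deriv f) I := hf.deriv_of_isOpen hIopen (by simp)
  have hc2 : HasDerivAt (deriv f) c a :=
    (((hf1.differentiableOn (by simp)) a ha).differentiableAt (hIopen.mem_nhds ha)).hasDerivAt
  set E : ℝ → ℝ := fun x => f x - f a - d1 * (x - a) - c / 2 * (x - a) ^ 2 with hEdef
  have hE : E =o[nhds a] fun x => (x - a) ^ 2 := peano2 hIopen ha hfd hc2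
  have hfc : ContinuousOn f I := hf.continuousOn
  have cl : Continuous fun t : ℝ => t - a := continuous_id.sub continuous_const
  have hEc : ContinuousOn E I :=
    ((hfc.sub continuousOn_const).sub ((continuous_const.mul cl).continuousOn)).sub
      ((continuous_const.mul (cl.pow 2)).continuousOn)
  -- basic eventual facts
  have hLle : L ≤ nhds a := nhdsWithin_le_nhds
  have hne : ∀ᶠ b in L, b ∈ I ∧ b ≠ a := by
    filter_upwards [self_mem_nhdsWithin] with b hb
    exact ⟨hb.1, fun h => hb.2 (by simp [h])⟩
  have huIcc : ∀ᶠ b in L, Set.uIcc a b ⊆ I := by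
    filter_upwards [hne] with b hb
    exact hIconv.ordConnected.uIcc_subset ha hb.1
  -- E b / (b-a)^2 → 0
  have key1 : Tendsto (fun b => E b / (b - a) ^ 2) (nhds a) (nhds 0) :=
    hE.tendsto_div_nhds_zero
  have hmidt : Tendsto (fun b : ℝ => (a + b) / 2) (nhds a) (nhds a) := by
    have h : Continuous fun b : ℝ => (a + b) / 2 := by continuity
    have := h.tendsto a
    simpa using this
  have key2 : Tendsto (fun b => E ((a + b) / 2) / (b - a) ^ 2) L (nhds 0) := by
    have h := ((key1.comp hmidt).mono_left hLle).mul_const (1 / 4 : ℝ)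
    rw [zero_mul] at h
    apply Tendsto.congr' _ h
    filter_upwards [hne] with b hb
    have hba : b - a ≠ 0 := sub_ne_zero.2 hb.2
    have h2 : ((a + b) / 2 - a) ^ 2 = (b - a) ^ 2 / 4 := by ring
    simp only [Function.comp_apply, h2]
    field_simp
  -- ∫ E = o((b-a)^3)
  have hint : (fun b => ∫ t in a..b, E t) =o[L] fun b => (b - a) ^ 3 := by
    rw [isLittleO_iff]
    intro ε hε
    obtain ⟨δ, hδpos, hδ⟩ := Metric.eventually_nhds_iff_ball.1 (isLittleO_iff.1 hE hε)
    filter_upwards [hLle (Metric.ball_mem_nhds a hδpos), huIcc] with b hb hb2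
    have hsub : Set.uIcc a b ⊆ Metric.closedBall a |b - a| :=
      (convex_closedBall a |b - a|).ordConnected.uIcc_subset (by simp)
        (by simp [Metric.mem_closedBall, Real.dist_eq])
    have hbd : ∀ x ∈ Set.uIoc a b, ‖E x‖ ≤ ε * |b - a| ^ 2 := by
      intro x hx
      have hx' : x ∈ Set.uIcc a b := Set.Ioc_subset_Icc_self hx
      have hxa : |x - a| ≤ |b - a| := by
        simpa [Real.dist_eq] using Metric.mem_closedBall.1 (hsub hx')
      have hxδ : x ∈ Metric.ball a δ := by
        rw [Metric.mem_ball, Real.dist_eq]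
        calc |x - a| ≤ |b - a| := hxa
          _ < δ := by simpa [Real.dist_eq] using hb
      calc ‖E x‖ ≤ ε * ‖(x - a) ^ 2‖ := hδ x hxδ
        _ = ε * |x - a| ^ 2 := by rw [norm_pow]; rfl
        _ ≤ ε * |b - a| ^ 2 := by
            apply mul_le_mul_of_nonneg_left _ hε.le
            exact pow_le_pow_left₀ (abs_nonneg _) hxa 2
    have h := intervalIntegral.norm_integral_le_of_norm_le_const hbd
    calc ‖∫ t in a..b, E t‖ ≤ ε * |b - a| ^ 2 * |b - a| := h
      _ = ε * ‖(b - a) ^ 3‖ := by rw [norm_pow]; push_cast; ring_nf; rfl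
  have hint0 : Tendsto (fun b => (∫ t in a..b, E t) / (b - a) ^ 3) L (nhds 0) :=
    hint.tendsto_div_nhds_zero
  -- integral decomposition
  have hsplit : ∀ᶠ b in L, (∫ t in a..b, f t) =
      f a * (b - a) + d1 / 2 * (b - a) ^ 2 + c / 6 * (b - a) ^ 3 + ∫ t in a..b, E t := by
    filter_upwards [huIcc] with b hb
    have hEint : IntervalIntegrable E volume a b :=
      (hEc.mono hb).intervalIntegrable
    have hpint : IntervalIntegrable (fun t => f a + d1 * (t - a) + c / 2 * (t - a) ^ 2) volume a b :=
      ((continuous_const.add (continuous_const.mul cl)).add (continuous_const.mul (cl.pow 2))).intervalIntegrable a b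
    have hfeq : ∀ t : ℝ, f t = (f a + d1 * (t - a) + c / 2 * (t - a) ^ 2) + E t := by
      intro t; simp only [hEdef]; ring
    have h1 : (∫ t in a..b, f t) =
        (∫ t in a..b, (f a + d1 * (t - a) + c / 2 * (t - a) ^ 2)) + ∫ t in a..b, E t := by
      rw [← intervalIntegral.integral_add hpint hEint]
      exact intervalIntegral.integral_congr fun t _ => hfeq t
    have h2 : (∫ t in a..b, (t - a)) = (b - a) ^ 2 / 2 := by
      rw [intervalIntegral.integral_comp_sub_right (fun t => t) a, integral_id]
      ring
    have h3 : (∫ t in a..b, (t - a) ^ 2) = (b - a) ^ 3 / 3 := by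
      rw [intervalIntegral.integral_comp_sub_right (fun t => t ^ 2) a, integral_pow]
      norm_num
    have i1 : IntervalIntegrable (fun t : ℝ => f a + d1 * (t - a)) volume a b :=
      (continuous_const.add (continuous_const.mul cl)).intervalIntegrable a b
    have i2 : IntervalIntegrable (fun t : ℝ => c / 2 * (t - a) ^ 2) volume a b :=
      (continuous_const.mul (cl.pow 2)).intervalIntegrable a b
    have i3 : IntervalIntegrable (fun t : ℝ => d1 * (t - a)) volume a b :=
      (continuous_const.mul cl).intervalIntegrable a b
    have h4 : (∫ t in a..b, (f a + d1 * (t - a) + c / 2 * (t - a) ^ 2)) =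
        f a * (b - a) + d1 / 2 * (b - a) ^ 2 + c / 6 * (b - a) ^ 3 := by
      rw [intervalIntegral.integral_add i1 i2,
        intervalIntegral.integral_add intervalIntegrable_const i3,
        intervalIntegral.integral_const, intervalIntegral.integral_const_mul,
        intervalIntegral.integral_const_mul, h2, h3]
      simp only [smul_eq_mul]
      ring
    rw [h1, h4]
  -- numerator limit
  have hNum : Tendsto (fun b => ((1 / (b - a)) * (∫ t in a..b, f t) - f ((a + b) / 2)) / (b - a) ^ 2)
      L (nhds (c / 24)) := by
    have h := (((tendsto_const_nhds (x := c / 24) (f := L)).add hint0).sub key2)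
    rw [add_zero, sub_zero] at h
    apply Tendsto.congr' _ h
    filter_upwards [hne, hsplit] with b hb hs
    have hba : b - a ≠ 0 := sub_ne_zero.2 hb.2
    have hfm : f ((a + b) / 2) = f a + d1 * ((a + b) / 2 - a) + c / 2 * ((a + b) / 2 - a) ^ 2
        + E ((a + b) / 2) := by
      simp only [hEdef]; ring
    rw [hs, hfm]
    field_simp
    ring
  -- denominator limit
  have hDen : Tendsto (fun b => (f a + f b - 2 * f ((a + b) / 2)) / (b - a) ^ 2)
      L (nhds (c / 4)) := by
    have h := (((tendsto_const_nhds (x := c / 4) (f := L)).add (key1.mono_left hLle)).sub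
      (key2.const_mul 2))
    rw [add_zero, mul_zero, sub_zero] at h
    apply Tendsto.congr' _ h
    filter_upwards [hne] with b hb
    have hba : b - a ≠ 0 := sub_ne_zero.2 hb.2
    have hfb : f b = f a + d1 * (b - a) + c / 2 * (b - a) ^ 2 + E b := by
      simp only [hEdef]; ring
    have hfm : f ((a + b) / 2) = f a + d1 * ((a + b) / 2 - a) + c / 2 * ((a + b) / 2 - a) ^ 2
        + E ((a + b) / 2) := by
      simp only [hEdef]; ring
    rw [hfb, hfm]
    field_simp
    ring
  -- combine
  have hfinal := hNum.div hDen (by positivity)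
  have hval : (c / 24) / (c / 4) = 1 / 6 := by
    rw [div_div_div_comm, div_self hc.ne']
    norm_num
  rw [hval] at hfinal
  apply Tendsto.congr' _ hfinal
  filter_upwards [hne] with b hb
  have hq : ((b - a) ^ 2 : ℝ) ≠ 0 := pow_ne_zero 2 (sub_ne_zero.2 hb.2)
  rcases eq_or_ne (f a + f b - 2 * f ((a + b) / 2)) 0 with h | h
  · simp [h]
  · simp only [Pi.div_apply]
    field_simp
    exact mul_div_cancel_left₀ _ (sub_ne_zero.2 hb.2)
end
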